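/- arXiv:2004.09617 — 9 statements merged into one kernel-verified Lean document; each statement's English description precedes it below -/
import Mathlib

section
/- Let Q(u,v) = k·u^{δ(1−βρ)}·((ρ−1)u+v)^{βδρ} be a 2-input VES production function on the domain D = {(u,v) ∈ ℝ² : u>0, v>0, (ρ−1)u+v>0}, with parameters satisfying k>0, 0<β<1, 0<βρ<1, δ>0. Then the Gaussian curvature K of the graph surface {(u,v,Q(u,v)) : (u,v) ∈ D} vanishes at every point of D if and only if δ = 1 (i.e., the VES production function has constant returns to scale if and only if the VES surface is developable). -/
open Real

/-- Partial derivative in the first variable. -/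
noncomputable def pdu (f : ℝ → ℝ → ℝ) : ℝ → ℝ → ℝ := fun u v => deriv (fun x => f x v) u

/-- Partial derivative in the second variable. -/
noncomputable def pdv (f : ℝ → ℝ → ℝ) : ℝ → ℝ → ℝ := fun u v => deriv (fun y => f u y) v

/-- Hessian determinant `f_uu · f_vv − f_uv²` of `f` at `(u, v)`. -/
noncomputable def hessDet (f : ℝ → ℝ → ℝ) (u v : ℝ) : ℝ :=
  pdu (pdu f) u v * pdv (pdv f) u v - pdv (pdu f) u v ^ 2

/-- Gaussian curvature of the graph surface `{(u, v, f u v)}` at `(u, v)`: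
`K = (f_uu · f_vv − f_uv²) / (1 + f_u² + f_v²)²`. -/
noncomputable def gaussK (f : ℝ → ℝ → ℝ) (u v : ℝ) : ℝ :=
  hessDet f u v / (1 + pdu f u v ^ 2 + pdv f u v ^ 2) ^ 2

/-- The 2-input VES production function
`Q(u,v) = k · u^(δ(1−βρ)) · ((ρ−1)u + v)^(βδρ)`. -/
noncomputable def QVES (k β ρ δ : ℝ) : ℝ → ℝ → ℝ := fun u v =>
  k * u ^ (δ * (1 - β * ρ)) * ((ρ - 1) * u + v) ^ (β * δ * ρ)

/-! Writing `w = (ρ - 1) u + v`, the VES function is `k u^a w^b` with `a + b = δ`. Partial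
derivatives of such products of powers are again sums of products of powers, and a direct
computation gives `f_uu f_vv - f_uv² = a b (1 - a - b) (k u^(a-1) w^(b-1))²` (the shear
`(u, v) ↦ (u, w)` has Jacobian determinant `1`, so this is the Cobb–Douglas Hessian).
Since `a, b > 0`, the curvature vanishes identically exactly when `a + b = 1`. -/

open Function Set

section PartialDerivatives

variable {f g : ℝ → ℝ → ℝ} {u v : ℝ}

theorem pdu_congr {s : Set (ℝ × ℝ)} (hs : IsOpen s) (hfg : EqOn (uncurry f) (uncurry g) s)
    (huv : (u, v) ∈ s) : pdu f u v = pdu g u v := by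
  have hslice : {x | (x, v) ∈ s} ∈ nhds u :=
    (Continuous.prodMk_left v).continuousAt.preimage_mem_nhds (hs.mem_nhds huv)
  exact Filter.EventuallyEq.deriv_eq (Filter.mem_of_superset hslice fun x hx => hfg hx)

theorem pdv_congr {s : Set (ℝ × ℝ)} (hs : IsOpen s) (hfg : EqOn (uncurry f) (uncurry g) s)
    (huv : (u, v) ∈ s) : pdv f u v = pdv g u v := by
  have hslice : {y | (u, y) ∈ s} ∈ nhds v :=
    (Continuous.prodMk_right u).continuousAt.preimage_mem_nhds (hs.mem_nhds huv)
  exact Filter.EventuallyEq.deriv_eq (Filter.mem_of_superset hslice fun y hy => hfg hy)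

theorem gaussK_eq_zero_iff : gaussK f u v = 0 ↔ hessDet f u v = 0 := by
  rw [gaussK, div_eq_zero_iff, or_iff_left (by positivity)]

end PartialDerivatives

noncomputable def powProd (k a b c : ℝ) : ℝ → ℝ → ℝ := fun u v => k * u ^ a * (c * u + v) ^ b

def powProdDomain (c : ℝ) : Set (ℝ × ℝ) := {p | p.1 ≠ 0 ∧ c * p.1 + p.2 ≠ 0}

theorem isOpen_powProdDomain (c : ℝ) : IsOpen (powProdDomain c) :=
  (isOpen_ne_fun continuous_fst continuous_const).inter
    (isOpen_ne_fun (by fun_prop) continuous_const)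

section PowProd

variable {k a b c u v : ℝ}

theorem hasDerivAt_powProd_left (hu : u ≠ 0) (hw : c * u + v ≠ 0) :
    HasDerivAt (fun x => powProd k a b c x v)
      (powProd (k * a) (a - 1) b c u v + powProd (k * b * c) a (b - 1) c u v) u := by
  have hlin : HasDerivAt (fun x => c * x + v) c u := by
    simpa using ((hasDerivAt_id u).const_mul c).add_const v
  exact (((Real.hasDerivAt_rpow_const (Or.inl hu)).const_mul k).mul
    (hlin.rpow_const (Or.inl hw))).congr_deriv (by simp only [powProd]; ring)

theorem hasDerivAt_powProd_right (hw : c * u + v ≠ 0) :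
    HasDerivAt (fun y => powProd k a b c u y) (powProd (k * b) a (b - 1) c u v) v := by
  have hlin : HasDerivAt (fun y => c * u + y) 1 v := by
    simpa using (hasDerivAt_id v).const_add (c * u)
  exact ((hlin.rpow_const (Or.inl hw)).const_mul (k * u ^ a)).congr_deriv
    (by simp only [powProd]; ring)

theorem pdu_powProd :
    EqOn (uncurry (pdu (powProd k a b c)))
      (uncurry (powProd (k * a) (a - 1) b c + powProd (k * b * c) a (b - 1) c))
      (powProdDomain c) :=
  fun _ ⟨hu, hw⟩ => (hasDerivAt_powProd_left hu hw).deriv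

theorem pdv_powProd :
    EqOn (uncurry (pdv (powProd k a b c))) (uncurry (powProd (k * b) a (b - 1) c))
      (powProdDomain c) :=
  fun _ ⟨_, hw⟩ => (hasDerivAt_powProd_right hw).deriv

theorem hessDet_powProd (hu : u ≠ 0) (hw : c * u + v ≠ 0) :
    hessDet (powProd k a b c) u v = a * b * (1 - a - b) * powProd k (a - 1) (b - 1) c u v ^ 2 := by
  have hs := isOpen_powProdDomain c
  have hdom : (u, v) ∈ powProdDomain c := ⟨hu, hw⟩
  rw [hessDet, pdu_congr hs pdu_powProd hdom, pdv_congr hs pdv_powProd hdom,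
    pdv_congr hs pdu_powProd hdom]
  simp only [pdu, pdv, Pi.add_apply]
  rw [deriv_fun_add (hasDerivAt_powProd_left hu hw).differentiableAt
      (hasDerivAt_powProd_left hu hw).differentiableAt,
    deriv_fun_add (hasDerivAt_powProd_right hw).differentiableAt
      (hasDerivAt_powProd_right hw).differentiableAt,
    (hasDerivAt_powProd_left hu hw).deriv, (hasDerivAt_powProd_left hu hw).deriv,
    (hasDerivAt_powProd_right hw).deriv, (hasDerivAt_powProd_right hw).deriv,
    (hasDerivAt_powProd_right hw).deriv]
  simp only [powProd, Real.rpow_sub_one hu, Real.rpow_sub_one hw]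
  generalize c * u + v = w at hw ⊢
  field_simp
  ring

end PowProd

theorem ves_developable_iff_constant_returns_general
    (k β ρ δ : ℝ) (hk : 0 < k)
    (hβρ0 : 0 < β * ρ) (hβρ1 : β * ρ < 1) (hδ : 0 < δ) :
    (∀ u v : ℝ, 0 < u → 0 < v → 0 < (ρ - 1) * u + v →
      gaussK (QVES k β ρ δ) u v = 0) ↔ δ = 1 := by
  set a := δ * (1 - β * ρ)
  set b := β * δ * ρ
  have hess {u v : ℝ} (hu : 0 < u) (hw : 0 < (ρ - 1) * u + v) :
      hessDet (QVES k β ρ δ) u v = a * b * (1 - δ) * powProd k (a - 1) (b - 1) (ρ - 1) u v ^ 2 := by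
    rw [show QVES k β ρ δ = powProd k a b (ρ - 1) from rfl, hessDet_powProd hu.ne' hw.ne']
    ring
  simp only [gaussK_eq_zero_iff]
  constructor
  · intro hdev
    set v := |ρ - 1| + 1
    have hw : 0 < (ρ - 1) * 1 + v := by linarith [neg_abs_le (ρ - 1)]
    have ha : a ≠ 0 := (mul_pos hδ (sub_pos.2 hβρ1)).ne'
    have hb : b ≠ 0 := ((mul_pos hδ hβρ0).trans_eq (by ring)).ne'
    have hP : powProd k (a - 1) (b - 1) (ρ - 1) 1 v ≠ 0 := by
      unfold powProd
      positivity
    have h := hdev 1 v one_pos (by positivity) hw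
    rw [hess one_pos hw] at h
    have hδ1 : 1 - δ = 0 := by simpa [ha, hb, hP] using h
    linarith
  · rintro rfl u v hu - hw
    rw [hess hu hw]
    ring

/-- The VES production function has constant returns to scale (`δ = 1`) if and only if
the VES surface is developable (the Gaussian curvature vanishes at every point of the
domain `D = {(u,v) : u > 0, v > 0, (ρ−1)u + v > 0}`). -/
theorem ves_developable_iff_constant_returns
    (k β ρ δ : ℝ) (hk : 0 < k) (hβ0 : 0 < β) (hβ1 : β < 1)
    (hβρ0 : 0 < β * ρ) (hβρ1 : β * ρ < 1) (hδ : 0 < δ) :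
    (∀ u v : ℝ, 0 < u → 0 < v → 0 < (ρ - 1) * u + v →
      gaussK (QVES k β ρ δ) u v = 0) ↔ δ = 1 :=
  ves_developable_iff_constant_returns_general k β ρ δ hk hβρ0 hβρ1 hδ
end

section
/- Let Q(u,v) = k·u^{δ(1−βρ)}·((ρ−1)u+v)^{βδρ} be a 2-input VES production function on the domain D = {(u,v) ∈ ℝ² : u>0, v>0, (ρ−1)u+v>0}, with parameters satisfying k>0, 0<β<1, 0<βρ<1, δ>0. Then the Gaussian curvature K of the graph surface {(u,v,Q(u,v)) : (u,v) ∈ D} is strictly negative at every point of D if and only if δ > 1 (i.e., the VES production function has increasing returns to scale if and only if the VES surface has negative Gaussian curvature). -/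
open Real

/-!
The VES function is a Cobb–Douglas function `k u^p w^q` in `u` and `w = (ρ - 1) u + v`, with
`p = δ(1 - βρ)`, `q = βδρ`, so `p + q = δ`. For `k u^p (c u + v)^q` the Hessian determinant
collapses to `k² p q (1 - p - q) (u^(p-1) (c u + v)^(q-1))²`, whose sign is that of `1 - δ`
when `p, q > 0`; the Gaussian curvature has the sign of the Hessian determinant.
-/

open Filter Topology

noncomputable def affineCobbDouglas (k p q c : ℝ) : ℝ → ℝ → ℝ := fun x y =>
  k * x ^ p * (c * x + y) ^ q

lemma QVES_eq_affineCobbDouglas (k β ρ δ : ℝ) :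
    QVES k β ρ δ = affineCobbDouglas k (δ * (1 - β * ρ)) (β * δ * ρ) (ρ - 1) := rfl

lemma gaussK_neg_iff (f : ℝ → ℝ → ℝ) (u v : ℝ) :
    gaussK f u v < 0 ↔ hessDet f u v < 0 := by
  rw [gaussK, div_lt_iff₀ (by positivity), zero_mul]

section AffineCobbDouglas

variable {k p q c u v : ℝ}

lemma hasDerivAt_affineCobbDouglas_fst (hu : 0 < u) (hw : 0 < c * u + v) :
    HasDerivAt (fun x => affineCobbDouglas k p q c x v)
      (affineCobbDouglas (k * p) (p - 1) q c u v
        + affineCobbDouglas (k * c * q) p (q - 1) c u v) u := by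
  have hx : HasDerivAt (fun x : ℝ => x ^ p) (p * u ^ (p - 1)) u :=
    hasDerivAt_rpow_const (Or.inl hu.ne')
  have hlin : HasDerivAt (fun x : ℝ => c * x + v) c u := by
    simpa using ((hasDerivAt_id u).const_mul c).add_const v
  refine ((hx.const_mul k).mul (hlin.rpow_const (p := q) (Or.inl hw.ne'))).congr_deriv ?_
  simp only [affineCobbDouglas]
  ring

lemma hasDerivAt_affineCobbDouglas_snd (hw : 0 < c * u + v) :
    HasDerivAt (fun y => affineCobbDouglas k p q c u y)
      (affineCobbDouglas (k * q) p (q - 1) c u v) v := by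
  have hlin : HasDerivAt (fun y : ℝ => c * u + y) 1 v := by
    simpa using (hasDerivAt_id v).const_add (c * u)
  refine ((hlin.rpow_const (p := q) (Or.inl hw.ne')).const_mul (k * u ^ p)).congr_deriv ?_
  simp only [affineCobbDouglas]
  ring

lemma pdu_affineCobbDouglas (hu : 0 < u) (hw : 0 < c * u + v) :
    pdu (affineCobbDouglas k p q c) u v
      = affineCobbDouglas (k * p) (p - 1) q c u v
        + affineCobbDouglas (k * c * q) p (q - 1) c u v :=
  (hasDerivAt_affineCobbDouglas_fst hu hw).deriv

lemma pdv_affineCobbDouglas (hw : 0 < c * u + v) :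
    pdv (affineCobbDouglas k p q c) u v = affineCobbDouglas (k * q) p (q - 1) c u v :=
  (hasDerivAt_affineCobbDouglas_snd hw).deriv

lemma eventually_pos_and_affine_pos_nhds (hu : 0 < u) (hw : 0 < c * u + v) :
    ∀ᶠ x in 𝓝 u, 0 < x ∧ 0 < c * x + v :=
  (eventually_gt_nhds hu).and <|
    (show Continuous fun x => c * x + v by fun_prop).continuousAt.eventually (eventually_gt_nhds hw)

lemma eventually_affine_pos_nhds (hw : 0 < c * u + v) : ∀ᶠ y in 𝓝 v, 0 < c * u + y :=
  (eventually_gt_nhds (neg_lt_iff_pos_add'.2 hw)).mono fun _ hy => neg_lt_iff_pos_add'.1 hy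

lemma pdu_pdu_affineCobbDouglas (hu : 0 < u) (hw : 0 < c * u + v) :
    pdu (pdu (affineCobbDouglas k p q c)) u v
      = affineCobbDouglas (k * p * (p - 1)) (p - 2) q c u v
        + 2 * affineCobbDouglas (k * p * c * q) (p - 1) (q - 1) c u v
        + affineCobbDouglas (k * c ^ 2 * q * (q - 1)) p (q - 2) c u v := by
  have hev : (fun x => pdu (affineCobbDouglas k p q c) x v) =ᶠ[𝓝 u] fun x =>
      affineCobbDouglas (k * p) (p - 1) q c x v
        + affineCobbDouglas (k * c * q) p (q - 1) c x v := by
    filter_upwards [eventually_pos_and_affine_pos_nhds hu hw] with x hx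
      using pdu_affineCobbDouglas hx.1 hx.2
  rw [pdu, hev.deriv_eq, ((hasDerivAt_affineCobbDouglas_fst hu hw).fun_add
    (hasDerivAt_affineCobbDouglas_fst hu hw)).deriv]
  simp only [affineCobbDouglas, sub_sub, one_add_one_eq_two]
  ring

lemma pdv_pdu_affineCobbDouglas (hu : 0 < u) (hw : 0 < c * u + v) :
    pdv (pdu (affineCobbDouglas k p q c)) u v
      = affineCobbDouglas (k * p * q) (p - 1) (q - 1) c u v
        + affineCobbDouglas (k * c * q * (q - 1)) p (q - 2) c u v := by
  have hev : (fun y => pdu (affineCobbDouglas k p q c) u y) =ᶠ[𝓝 v] fun y =>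
      affineCobbDouglas (k * p) (p - 1) q c u y
        + affineCobbDouglas (k * c * q) p (q - 1) c u y := by
    filter_upwards [eventually_affine_pos_nhds hw] with y hy using pdu_affineCobbDouglas hu hy
  rw [pdv, hev.deriv_eq, ((hasDerivAt_affineCobbDouglas_snd hw).fun_add
    (hasDerivAt_affineCobbDouglas_snd hw)).deriv]
  simp only [affineCobbDouglas, sub_sub, one_add_one_eq_two]

lemma pdv_pdv_affineCobbDouglas (hw : 0 < c * u + v) :
    pdv (pdv (affineCobbDouglas k p q c)) u v
      = affineCobbDouglas (k * q * (q - 1)) p (q - 2) c u v := by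
  have hev : (fun y => pdv (affineCobbDouglas k p q c) u y) =ᶠ[𝓝 v] fun y =>
      affineCobbDouglas (k * q) p (q - 1) c u y := by
    filter_upwards [eventually_affine_pos_nhds hw] with y hy using pdv_affineCobbDouglas hy
  rw [pdv, hev.deriv_eq, (hasDerivAt_affineCobbDouglas_snd hw).deriv]
  simp only [affineCobbDouglas, sub_sub, one_add_one_eq_two]

lemma hessDet_affineCobbDouglas (hu : 0 < u) (hw : 0 < c * u + v) :
    hessDet (affineCobbDouglas k p q c) u v
      = k ^ 2 * p * q * (1 - p - q) * (u ^ (p - 1) * (c * u + v) ^ (q - 1)) ^ 2 := by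
  rw [hessDet, pdu_pdu_affineCobbDouglas hu hw, pdv_pdv_affineCobbDouglas hw,
    pdv_pdu_affineCobbDouglas hu hw]
  simp only [affineCobbDouglas]
  set w := c * u + v
  -- with every power written over `u ^ (p - 2)` and `w ^ (q - 2)` the identity is polynomial
  have hu1 : u ^ (p - 1) = u ^ (p - 2) * u := by
    rw [← rpow_add_one hu.ne']; ring_nf
  have hu0 : u ^ p = u ^ (p - 2) * u ^ 2 := by
    rw [← rpow_two, ← rpow_add hu]; ring_nf
  have hw1 : w ^ (q - 1) = w ^ (q - 2) * w := by
    rw [← rpow_add_one hw.ne']; ring_nf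
  have hw0 : w ^ q = w ^ (q - 2) * w ^ 2 := by
    rw [← rpow_two, ← rpow_add hw]; ring_nf
  rw [hu1, hu0, hw1, hw0]
  ring

lemma hessDet_affineCobbDouglas_neg_iff (hk : k ≠ 0) (hp : 0 < p) (hq : 0 < q) (hu : 0 < u)
    (hw : 0 < c * u + v) :
    hessDet (affineCobbDouglas k p q c) u v < 0 ↔ 1 < p + q := by
  have hpos : 0 < k ^ 2 * p * q * (u ^ (p - 1) * (c * u + v) ^ (q - 1)) ^ 2 := by positivity
  rw [hessDet_affineCobbDouglas hu hw, mul_right_comm _ (1 - p - q), sub_sub,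
    ← smul_eq_mul, smul_neg_iff_of_pos_left hpos, sub_neg]

end AffineCobbDouglas

theorem ves_negative_curvature_iff_increasing_returns_general
    (k β ρ δ : ℝ) (hk : 0 < k)
    (hβρ0 : 0 < β * ρ) (hβρ1 : β * ρ < 1) (hδ : 0 < δ) :
    (∀ u v : ℝ, 0 < u → 0 < v → 0 < (ρ - 1) * u + v →
      gaussK (QVES k β ρ δ) u v < 0) ↔ 1 < δ := by
  have hp : 0 < δ * (1 - β * ρ) := mul_pos hδ (sub_pos.2 hβρ1)
  have hq : 0 < β * δ * ρ := by rw [mul_right_comm]; exact mul_pos hβρ0 hδ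
  have hcurv : ∀ u v, 0 < u → 0 < (ρ - 1) * u + v →
      (gaussK (QVES k β ρ δ) u v < 0 ↔ 1 < δ) := by
    intro u v hu hw
    rw [gaussK_neg_iff, QVES_eq_affineCobbDouglas,
      hessDet_affineCobbDouglas_neg_iff hk.ne' hp hq hu hw,
      show δ * (1 - β * ρ) + β * δ * ρ = δ by ring]
  have hw : 0 < (ρ - 1) * 1 + (|ρ - 1| + 1) := by linarith [neg_abs_le (ρ - 1)]
  exact ⟨fun h => (hcurv 1 _ one_pos hw).1 (h 1 _ one_pos (by positivity) hw),
    fun hδ1 u v hu _ hw => (hcurv u v hu hw).2 hδ1⟩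

/-- The VES production function has increasing returns to scale (`δ > 1`) if and only if
the VES surface has strictly negative Gaussian curvature at every point of the domain
`D = {(u,v) : u > 0, v > 0, (ρ−1)u + v > 0}`. -/
theorem ves_negative_curvature_iff_increasing_returns
    (k β ρ δ : ℝ) (hk : 0 < k) (hβ0 : 0 < β) (hβ1 : β < 1)
    (hβρ0 : 0 < β * ρ) (hβρ1 : β * ρ < 1) (hδ : 0 < δ) :
    (∀ u v : ℝ, 0 < u → 0 < v → 0 < (ρ - 1) * u + v →
      gaussK (QVES k β ρ δ) u v < 0) ↔ 1 < δ :=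
  ves_negative_curvature_iff_increasing_returns_general k β ρ δ hk hβρ0 hβρ1 hδ
end

section
/- Let Q(u,v) = k·u^{δ(1−βρ)}·((ρ−1)u+v)^{βδρ} be a 2-input VES production function on the domain D = {(u,v) ∈ ℝ² : u>0, v>0, (ρ−1)u+v>0}, with parameters satisfying k>0, 0<β<1, 0<βρ<1, δ>0. Then at every point (u,v) ∈ D, the Hessian determinant Q_uu(u,v)·Q_vv(u,v) − Q_uv(u,v)² has the same sign as 1 − δ: it is zero if δ = 1, strictly positive if δ < 1, and strictly negative if δ > 1. -/
open Real

/-! With `w = (ρ - 1)u + v`, `Q = k u^a w^b` where `a = δ(1 - βρ) > 0`, `b = βδρ > 0` and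
`a + b = δ`. Differentiating twice, all terms involving the shear coefficient `ρ - 1` cancel
and `Q_uu Q_vv - Q_uv² = a b (1 - a - b) Q² / (u² w²)`, whose sign is that of `1 - δ`. -/

noncomputable def shearedCobbDouglas (k c a b : ℝ) : ℝ → ℝ → ℝ := fun u v =>
  k * u ^ a * (c * u + v) ^ b

lemma pdu_congr_of_eqOn {f g : ℝ → ℝ → ℝ} {s : Set (ℝ × ℝ)} {u v : ℝ} (hs : IsOpen s)
    (hfg : ∀ x y, (x, y) ∈ s → f x y = g x y) (hp : (u, v) ∈ s) : pdu f u v = pdu g u v := by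
  refine Filter.EventuallyEq.deriv_eq ?_
  filter_upwards [(hs.preimage (Continuous.prodMk_left v)).mem_nhds hp]
    with x hx using hfg x v hx

lemma pdv_congr_of_eqOn {f g : ℝ → ℝ → ℝ} {s : Set (ℝ × ℝ)} {u v : ℝ} (hs : IsOpen s)
    (hfg : ∀ x y, (x, y) ∈ s → f x y = g x y) (hp : (u, v) ∈ s) : pdv f u v = pdv g u v := by
  refine Filter.EventuallyEq.deriv_eq ?_
  filter_upwards [(hs.preimage (Continuous.prodMk_right u)).mem_nhds hp]
    with y hy using hfg u y hy

namespace shearedCobbDouglas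

def domain (c : ℝ) : Set (ℝ × ℝ) := {p | 0 < p.1 ∧ 0 < c * p.1 + p.2}

lemma isOpen_domain (c : ℝ) : IsOpen (domain c) :=
  (isOpen_lt continuous_const continuous_fst).inter
    (isOpen_lt continuous_const ((continuous_const.mul continuous_fst).add continuous_snd))

variable {k c a b u v : ℝ}

lemma hasDerivAt_fst (hu : 0 < u) (hw : 0 < c * u + v) :
    HasDerivAt (fun x => shearedCobbDouglas k c a b x v)
      (shearedCobbDouglas (k * a) c (a - 1) b u v
        + shearedCobbDouglas (k * b * c) c a (b - 1) u v) u := by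
  have hpow : HasDerivAt (fun x : ℝ => x ^ a) (a * u ^ (a - 1)) u :=
    hasDerivAt_rpow_const (Or.inl hu.ne')
  have hlin : HasDerivAt (fun x : ℝ => c * x + v) c u := by
    simpa using ((hasDerivAt_id u).const_mul c).add_const v
  have hshear : HasDerivAt (fun x : ℝ => (c * x + v) ^ b) (c * b * (c * u + v) ^ (b - 1)) u :=
    hlin.rpow_const (Or.inl hw.ne')
  refine ((hpow.const_mul k).mul hshear).congr_deriv ?_
  simp only [shearedCobbDouglas]
  ring

lemma hasDerivAt_snd (hw : 0 < c * u + v) :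
    HasDerivAt (fun y => shearedCobbDouglas k c a b u y)
      (shearedCobbDouglas (k * b) c a (b - 1) u v) v := by
  have hshear : HasDerivAt (fun y : ℝ => (c * u + y) ^ b) (1 * b * (c * u + v) ^ (b - 1)) v :=
    ((hasDerivAt_id v).const_add (c * u)).rpow_const (Or.inl hw.ne')
  refine (hshear.const_mul (k * u ^ a)).congr_deriv ?_
  simp only [shearedCobbDouglas]
  ring

lemma pdu_eq (hp : (u, v) ∈ domain c) :
    pdu (shearedCobbDouglas k c a b) u v =
      shearedCobbDouglas (k * a) c (a - 1) b u v
        + shearedCobbDouglas (k * b * c) c a (b - 1) u v :=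
  (hasDerivAt_fst hp.1 hp.2).deriv

lemma pdv_eq (hp : (u, v) ∈ domain c) :
    pdv (shearedCobbDouglas k c a b) u v = shearedCobbDouglas (k * b) c a (b - 1) u v :=
  (hasDerivAt_snd hp.2).deriv

lemma pdu_pdu_eq (hp : (u, v) ∈ domain c) :
    pdu (pdu (shearedCobbDouglas k c a b)) u v =
      shearedCobbDouglas (k * a * (a - 1)) c (a - 1 - 1) b u v
        + shearedCobbDouglas (k * a * b * c) c (a - 1) (b - 1) u v
        + (shearedCobbDouglas (k * b * c * a) c (a - 1) (b - 1) u v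
          + shearedCobbDouglas (k * b * c * (b - 1) * c) c a (b - 1 - 1) u v) := by
  rw [pdu_congr_of_eqOn (isOpen_domain c) (fun _ _ hxy => pdu_eq hxy) hp]
  exact ((hasDerivAt_fst hp.1 hp.2).add (hasDerivAt_fst hp.1 hp.2)).deriv

lemma pdv_pdu_eq (hp : (u, v) ∈ domain c) :
    pdv (pdu (shearedCobbDouglas k c a b)) u v =
      shearedCobbDouglas (k * a * b) c (a - 1) (b - 1) u v
        + shearedCobbDouglas (k * b * c * (b - 1)) c a (b - 1 - 1) u v := by
  rw [pdv_congr_of_eqOn (isOpen_domain c) (fun _ _ hxy => pdu_eq hxy) hp]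
  exact ((hasDerivAt_snd hp.2).add (hasDerivAt_snd hp.2)).deriv

lemma pdv_pdv_eq (hp : (u, v) ∈ domain c) :
    pdv (pdv (shearedCobbDouglas k c a b)) u v =
      shearedCobbDouglas (k * b * (b - 1)) c a (b - 1 - 1) u v := by
  rw [pdv_congr_of_eqOn (isOpen_domain c) (fun _ _ hxy => pdv_eq hxy) hp]
  exact (hasDerivAt_snd hp.2).deriv

theorem hessDet_eq (hp : (u, v) ∈ domain c) :
    hessDet (shearedCobbDouglas k c a b) u v =
      (1 - (a + b)) * (a * b * shearedCobbDouglas k c a b u v ^ 2 / (u ^ 2 * (c * u + v) ^ 2)) := by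
  have hu : u ≠ 0 := hp.1.ne'
  have hw : c * u + v ≠ 0 := hp.2.ne'
  rw [hessDet, pdu_pdu_eq hp, pdv_pdv_eq hp, pdv_pdu_eq hp]
  simp only [shearedCobbDouglas, rpow_sub_one hu, rpow_sub_one hw]
  generalize c * u + v = w at hw ⊢
  field_simp
  ring

lemma exists_pos_hessDet_eq (hk : k ≠ 0) (ha : 0 < a) (hb : 0 < b) (hp : (u, v) ∈ domain c) :
    ∃ P, 0 < P ∧ hessDet (shearedCobbDouglas k c a b) u v = (1 - (a + b)) * P := by
  obtain ⟨hu, hw⟩ := hp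
  have hS : shearedCobbDouglas k c a b u v ≠ 0 :=
    mul_ne_zero (mul_ne_zero hk (rpow_pos_of_pos hu a).ne') (rpow_pos_of_pos hw b).ne'
  exact ⟨_, by positivity, hessDet_eq ⟨hu, hw⟩⟩

end shearedCobbDouglas

theorem ves_hessDet_sign_general
    (k β ρ δ : ℝ) (hk : 0 < k)
    (hβρ0 : 0 < β * ρ) (hβρ1 : β * ρ < 1) (hδ : 0 < δ) :
    ∀ u v : ℝ, 0 < u → 0 < v → 0 < (ρ - 1) * u + v →
      (δ = 1 → hessDet (QVES k β ρ δ) u v = 0) ∧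
      (δ < 1 → 0 < hessDet (QVES k β ρ δ) u v) ∧
      (1 < δ → hessDet (QVES k β ρ δ) u v < 0) := by
  intro u v hu _ hw
  have hQ : QVES k β ρ δ = shearedCobbDouglas k (ρ - 1) (δ * (1 - β * ρ)) (β * δ * ρ) := rfl
  obtain ⟨P, hP, hdet⟩ := shearedCobbDouglas.exists_pos_hessDet_eq
    (a := δ * (1 - β * ρ)) (b := β * δ * ρ) hk.ne' (mul_pos hδ (by linarith)) (by nlinarith)
    (show (u, v) ∈ _ from ⟨hu, hw⟩)
  rw [show δ * (1 - β * ρ) + β * δ * ρ = δ by ring, ← hQ] at hdet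
  refine ⟨fun h => ?_, fun h => ?_, fun h => ?_⟩ <;> rw [hdet]
  · rw [h, sub_self, zero_mul]
  · exact mul_pos (by linarith) hP
  · exact mul_neg_of_neg_of_pos (by linarith) hP

/-- At every point of the domain `D = {(u,v) : u > 0, v > 0, (ρ−1)u + v > 0}`, the Hessian
determinant `Q_uu·Q_vv − Q_uv²` of the VES production function has the same sign as `1 − δ`:
it is zero if `δ = 1`, strictly positive if `δ < 1`, and strictly negative if `δ > 1`. -/
theorem ves_hessDet_sign
    (k β ρ δ : ℝ) (hk : 0 < k) (hβ0 : 0 < β) (hβ1 : β < 1)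
    (hβρ0 : 0 < β * ρ) (hβρ1 : β * ρ < 1) (hδ : 0 < δ) :
    ∀ u v : ℝ, 0 < u → 0 < v → 0 < (ρ - 1) * u + v →
      (δ = 1 → hessDet (QVES k β ρ δ) u v = 0) ∧
      (δ < 1 → 0 < hessDet (QVES k β ρ δ) u v) ∧
      (1 < δ → hessDet (QVES k β ρ δ) u v < 0) :=
  ves_hessDet_sign_general k β ρ δ hk hβρ0 hβρ1 hδ
end

section
/- Let P(u,v) = (k₁·u^{β₁+β₂} + 2k₂·u^{β₁}·v^{β₂} + k₃·v^{β₁+β₂})^{δ/(β₁+β₂)} be a 2-input Kadiyala production function on (0,∞)², with parameters satisfying (★★): k₁+2k₂+k₃=1, k₁,k₂,k₃ ≥ 0, (k₁,k₂) ≠ (0,0), (k₂,k₃) ≠ (0,0), β₁(β₁+β₂) > 0, β₂(β₁+β₂) > 0, δ > 0. Then the Gaussian curvature of the graph surface {(u,v,P(u,v)) : u>0, v>0} vanishes at every point of (0,∞)² if and only if at least one of the following holds: (i) δ = 1; (ii) k₂ = 0 and β₁+β₂ = 1; (iii) β₁ = β₂ = 1 and k₂² − k₁k₃ = 0. -/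
open Real

/-- The 2-input Kadiyala production function
`P(u,v) = (k₁·u^(β₁+β₂) + 2k₂·u^β₁·v^β₂ + k₃·v^(β₁+β₂))^(δ/(β₁+β₂))`. -/
noncomputable def PKad (k₁ k₂ k₃ β₁ β₂ δ : ℝ) : ℝ → ℝ → ℝ := fun u v =>
  (k₁ * u ^ (β₁ + β₂) + 2 * k₂ * u ^ β₁ * v ^ β₂ + k₃ * v ^ (β₁ + β₂)) ^ (δ / (β₁ + β₂))


private lemma hasDerivAt_gx (k1 k2 k3 a b v : ℝ) {u : ℝ} (hu : 0 < u) :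
    HasDerivAt (fun x : ℝ => k1 * x ^ (a + b) + 2 * k2 * x ^ a * v ^ b + k3 * v ^ (a + b))
      (k1 * ((a + b) * u ^ (a + b - 1)) + 2 * k2 * (a * u ^ (a - 1)) * v ^ b) u := by
  have h1 : HasDerivAt (fun x : ℝ => x ^ (a + b)) ((a + b) * u ^ (a + b - 1)) u :=
    Real.hasDerivAt_rpow_const (Or.inl hu.ne')
  have h2 : HasDerivAt (fun x : ℝ => x ^ a) (a * u ^ (a - 1)) u :=
    Real.hasDerivAt_rpow_const (Or.inl hu.ne')
  exact ((h1.const_mul k1).add ((h2.const_mul (2 * k2)).mul_const (v ^ b))).add_const _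


private lemma hasDerivAt_gy (k1 k2 k3 a b u : ℝ) {v : ℝ} (hv : 0 < v) :
    HasDerivAt (fun y : ℝ => k1 * u ^ (a + b) + 2 * k2 * u ^ a * y ^ b + k3 * y ^ (a + b))
      (2 * k2 * u ^ a * (b * v ^ (b - 1)) + k3 * ((a + b) * v ^ (a + b - 1))) v := by
  have h1 : HasDerivAt (fun y : ℝ => y ^ b) (b * v ^ (b - 1)) v :=
    Real.hasDerivAt_rpow_const (Or.inl hv.ne')
  have h2 : HasDerivAt (fun y : ℝ => y ^ (a + b)) ((a + b) * v ^ (a + b - 1)) v :=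
    Real.hasDerivAt_rpow_const (Or.inl hv.ne')
  exact ((h1.const_mul (2 * k2 * u ^ a)).const_add (k1 * u ^ (a + b))).add (h2.const_mul k3)


private lemma pdu_PKad (k1 k2 k3 a b d : ℝ) {u v : ℝ} (hu : 0 < u) (_hv : 0 < v)
    (hG : 0 < k1 * u ^ (a + b) + 2 * k2 * u ^ a * v ^ b + k3 * v ^ (a + b)) :
    pdu (PKad k1 k2 k3 a b d) u v =
      (k1 * ((a + b) * u ^ (a + b - 1)) + 2 * k2 * (a * u ^ (a - 1)) * v ^ b) * (d / (a + b)) *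
        (k1 * u ^ (a + b) + 2 * k2 * u ^ a * v ^ b + k3 * v ^ (a + b)) ^ (d / (a + b) - 1) := by
  have h := (hasDerivAt_gx k1 k2 k3 a b v hu).rpow_const (p := d / (a + b)) (Or.inl hG.ne')
  exact h.deriv


private lemma pdv_PKad (k1 k2 k3 a b d : ℝ) {u v : ℝ} (_hu : 0 < u) (hv : 0 < v)
    (hG : 0 < k1 * u ^ (a + b) + 2 * k2 * u ^ a * v ^ b + k3 * v ^ (a + b)) :
    pdv (PKad k1 k2 k3 a b d) u v =
      (2 * k2 * u ^ a * (b * v ^ (b - 1)) + k3 * ((a + b) * v ^ (a + b - 1))) * (d / (a + b)) *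
        (k1 * u ^ (a + b) + 2 * k2 * u ^ a * v ^ b + k3 * v ^ (a + b)) ^ (d / (a + b) - 1) := by
  have h := (hasDerivAt_gy k1 k2 k3 a b u hv).rpow_const (p := d / (a + b)) (Or.inl hG.ne')
  exact h.deriv


private lemma pduu_PKad (k1 k2 k3 a b d : ℝ) {u v : ℝ} (hu : 0 < u) (hv : 0 < v)
    (hGall : ∀ x y : ℝ, 0 < x → 0 < y →
      0 < k1 * x ^ (a + b) + 2 * k2 * x ^ a * y ^ b + k3 * y ^ (a + b)) :
    pdu (pdu (PKad k1 k2 k3 a b d)) u v =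
      (k1 * ((a + b) * ((a + b - 1) * u ^ (a + b - 1 - 1))) +
          2 * k2 * (a * ((a - 1) * u ^ (a - 1 - 1))) * v ^ b) * (d / (a + b)) *
        (k1 * u ^ (a + b) + 2 * k2 * u ^ a * v ^ b + k3 * v ^ (a + b)) ^ (d / (a + b) - 1) +
      (k1 * ((a + b) * u ^ (a + b - 1)) + 2 * k2 * (a * u ^ (a - 1)) * v ^ b) * (d / (a + b)) *
        ((k1 * ((a + b) * u ^ (a + b - 1)) + 2 * k2 * (a * u ^ (a - 1)) * v ^ b) *
          (d / (a + b) - 1) *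
          (k1 * u ^ (a + b) + 2 * k2 * u ^ a * v ^ b + k3 * v ^ (a + b)) ^ (d / (a + b) - 1 - 1)) := by
  have hev : (fun x => pdu (PKad k1 k2 k3 a b d) x v) =ᶠ[nhds u]
      (fun x => (k1 * ((a + b) * x ^ (a + b - 1)) + 2 * k2 * (a * x ^ (a - 1)) * v ^ b) *
        (d / (a + b)) *
        (k1 * x ^ (a + b) + 2 * k2 * x ^ a * v ^ b + k3 * v ^ (a + b)) ^ (d / (a + b) - 1)) := by
    filter_upwards [Ioi_mem_nhds hu] with x hx
    exact pdu_PKad k1 k2 k3 a b d hx hv (hGall x v hx hv)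
  have h1 : HasDerivAt (fun x : ℝ => x ^ (a + b - 1)) ((a + b - 1) * u ^ (a + b - 1 - 1)) u :=
    Real.hasDerivAt_rpow_const (Or.inl hu.ne')
  have h2 : HasDerivAt (fun x : ℝ => x ^ (a - 1)) ((a - 1) * u ^ (a - 1 - 1)) u :=
    Real.hasDerivAt_rpow_const (Or.inl hu.ne')
  have hGU : HasDerivAt
      (fun x : ℝ => k1 * ((a + b) * x ^ (a + b - 1)) + 2 * k2 * (a * x ^ (a - 1)) * v ^ b)
      (k1 * ((a + b) * ((a + b - 1) * u ^ (a + b - 1 - 1))) +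
        2 * k2 * (a * ((a - 1) * u ^ (a - 1 - 1))) * v ^ b) u :=
    ((h1.const_mul (a + b)).const_mul k1).add
      (((h2.const_mul a).const_mul (2 * k2)).mul_const (v ^ b))
  have hpow : HasDerivAt
      (fun x : ℝ => (k1 * x ^ (a + b) + 2 * k2 * x ^ a * v ^ b + k3 * v ^ (a + b)) ^
        (d / (a + b) - 1))
      ((k1 * ((a + b) * u ^ (a + b - 1)) + 2 * k2 * (a * u ^ (a - 1)) * v ^ b) *
        (d / (a + b) - 1) *
        (k1 * u ^ (a + b) + 2 * k2 * u ^ a * v ^ b + k3 * v ^ (a + b)) ^ (d / (a + b) - 1 - 1)) u :=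
    (hasDerivAt_gx k1 k2 k3 a b v hu).rpow_const (Or.inl (hGall u v hu hv).ne')
  calc pdu (pdu (PKad k1 k2 k3 a b d)) u v
      = deriv (fun x => pdu (PKad k1 k2 k3 a b d) x v) u := rfl
    _ = _ := hev.deriv_eq
    _ = _ := ((hGU.mul_const (d / (a + b))).mul hpow).deriv


private lemma pduv_PKad (k1 k2 k3 a b d : ℝ) {u v : ℝ} (hu : 0 < u) (hv : 0 < v)
    (hGall : ∀ x y : ℝ, 0 < x → 0 < y →
      0 < k1 * x ^ (a + b) + 2 * k2 * x ^ a * y ^ b + k3 * y ^ (a + b)) :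
    pdv (pdu (PKad k1 k2 k3 a b d)) u v =
      2 * k2 * (a * u ^ (a - 1)) * (b * v ^ (b - 1)) * (d / (a + b)) *
        (k1 * u ^ (a + b) + 2 * k2 * u ^ a * v ^ b + k3 * v ^ (a + b)) ^ (d / (a + b) - 1) +
      (k1 * ((a + b) * u ^ (a + b - 1)) + 2 * k2 * (a * u ^ (a - 1)) * v ^ b) * (d / (a + b)) *
        ((2 * k2 * u ^ a * (b * v ^ (b - 1)) + k3 * ((a + b) * v ^ (a + b - 1))) *
          (d / (a + b) - 1) *
          (k1 * u ^ (a + b) + 2 * k2 * u ^ a * v ^ b + k3 * v ^ (a + b)) ^ (d / (a + b) - 1 - 1)) := by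
  have hev : (fun y => pdu (PKad k1 k2 k3 a b d) u y) =ᶠ[nhds v]
      (fun y => (k1 * ((a + b) * u ^ (a + b - 1)) + 2 * k2 * (a * u ^ (a - 1)) * y ^ b) *
        (d / (a + b)) *
        (k1 * u ^ (a + b) + 2 * k2 * u ^ a * y ^ b + k3 * y ^ (a + b)) ^ (d / (a + b) - 1)) := by
    filter_upwards [Ioi_mem_nhds hv] with y hy
    exact pdu_PKad k1 k2 k3 a b d hu hy (hGall u y hu hy)
  have h1 : HasDerivAt (fun y : ℝ => y ^ b) (b * v ^ (b - 1)) v :=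
    Real.hasDerivAt_rpow_const (Or.inl hv.ne')
  have hGU : HasDerivAt
      (fun y : ℝ => k1 * ((a + b) * u ^ (a + b - 1)) + 2 * k2 * (a * u ^ (a - 1)) * y ^ b)
      (2 * k2 * (a * u ^ (a - 1)) * (b * v ^ (b - 1))) v :=
    (h1.const_mul (2 * k2 * (a * u ^ (a - 1)))).const_add _
  have hpow : HasDerivAt
      (fun y : ℝ => (k1 * u ^ (a + b) + 2 * k2 * u ^ a * y ^ b + k3 * y ^ (a + b)) ^
        (d / (a + b) - 1))
      ((2 * k2 * u ^ a * (b * v ^ (b - 1)) + k3 * ((a + b) * v ^ (a + b - 1))) *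
        (d / (a + b) - 1) *
        (k1 * u ^ (a + b) + 2 * k2 * u ^ a * v ^ b + k3 * v ^ (a + b)) ^ (d / (a + b) - 1 - 1)) v :=
    (hasDerivAt_gy k1 k2 k3 a b u hv).rpow_const (Or.inl (hGall u v hu hv).ne')
  calc pdv (pdu (PKad k1 k2 k3 a b d)) u v
      = deriv (fun y => pdu (PKad k1 k2 k3 a b d) u y) v := rfl
    _ = _ := hev.deriv_eq
    _ = _ := ((hGU.mul_const (d / (a + b))).mul hpow).deriv


private lemma pdvv_PKad (k1 k2 k3 a b d : ℝ) {u v : ℝ} (hu : 0 < u) (hv : 0 < v)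
    (hGall : ∀ x y : ℝ, 0 < x → 0 < y →
      0 < k1 * x ^ (a + b) + 2 * k2 * x ^ a * y ^ b + k3 * y ^ (a + b)) :
    pdv (pdv (PKad k1 k2 k3 a b d)) u v =
      (2 * k2 * u ^ a * (b * ((b - 1) * v ^ (b - 1 - 1))) +
          k3 * ((a + b) * ((a + b - 1) * v ^ (a + b - 1 - 1)))) * (d / (a + b)) *
        (k1 * u ^ (a + b) + 2 * k2 * u ^ a * v ^ b + k3 * v ^ (a + b)) ^ (d / (a + b) - 1) +
      (2 * k2 * u ^ a * (b * v ^ (b - 1)) + k3 * ((a + b) * v ^ (a + b - 1))) * (d / (a + b)) *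
        ((2 * k2 * u ^ a * (b * v ^ (b - 1)) + k3 * ((a + b) * v ^ (a + b - 1))) *
          (d / (a + b) - 1) *
          (k1 * u ^ (a + b) + 2 * k2 * u ^ a * v ^ b + k3 * v ^ (a + b)) ^ (d / (a + b) - 1 - 1)) := by
  have hev : (fun y => pdv (PKad k1 k2 k3 a b d) u y) =ᶠ[nhds v]
      (fun y => (2 * k2 * u ^ a * (b * y ^ (b - 1)) + k3 * ((a + b) * y ^ (a + b - 1))) *
        (d / (a + b)) *
        (k1 * u ^ (a + b) + 2 * k2 * u ^ a * y ^ b + k3 * y ^ (a + b)) ^ (d / (a + b) - 1)) := by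
    filter_upwards [Ioi_mem_nhds hv] with y hy
    exact pdv_PKad k1 k2 k3 a b d hu hy (hGall u y hu hy)
  have h1 : HasDerivAt (fun y : ℝ => y ^ (b - 1)) ((b - 1) * v ^ (b - 1 - 1)) v :=
    Real.hasDerivAt_rpow_const (Or.inl hv.ne')
  have h2 : HasDerivAt (fun y : ℝ => y ^ (a + b - 1)) ((a + b - 1) * v ^ (a + b - 1 - 1)) v :=
    Real.hasDerivAt_rpow_const (Or.inl hv.ne')
  have hGV : HasDerivAt
      (fun y : ℝ => 2 * k2 * u ^ a * (b * y ^ (b - 1)) + k3 * ((a + b) * y ^ (a + b - 1)))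
      (2 * k2 * u ^ a * (b * ((b - 1) * v ^ (b - 1 - 1))) +
        k3 * ((a + b) * ((a + b - 1) * v ^ (a + b - 1 - 1)))) v :=
    ((h1.const_mul b).const_mul (2 * k2 * u ^ a)).add ((h2.const_mul (a + b)).const_mul k3)
  have hpow : HasDerivAt
      (fun y : ℝ => (k1 * u ^ (a + b) + 2 * k2 * u ^ a * y ^ b + k3 * y ^ (a + b)) ^
        (d / (a + b) - 1))
      ((2 * k2 * u ^ a * (b * v ^ (b - 1)) + k3 * ((a + b) * v ^ (a + b - 1))) *
        (d / (a + b) - 1) *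
        (k1 * u ^ (a + b) + 2 * k2 * u ^ a * v ^ b + k3 * v ^ (a + b)) ^ (d / (a + b) - 1 - 1)) v :=
    (hasDerivAt_gy k1 k2 k3 a b u hv).rpow_const (Or.inl (hGall u v hu hv).ne')
  calc pdv (pdv (PKad k1 k2 k3 a b d)) u v
      = deriv (fun y => pdv (PKad k1 k2 k3 a b d) u y) v := rfl
    _ = _ := hev.deriv_eq
    _ = _ := ((hGV.mul_const (d / (a + b))).mul hpow).deriv


set_option maxHeartbeats 16000000 in
private lemma hess_eq (k1 k2 k3 a b d : ℝ) {u v : ℝ} (hu : 0 < u) (hv : 0 < v)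
    (hs : a + b ≠ 0)
    (hGall : ∀ x y : ℝ, 0 < x → 0 < y →
      0 < k1 * x ^ (a + b) + 2 * k2 * x ^ a * y ^ b + k3 * y ^ (a + b)) :
    hessDet (PKad k1 k2 k3 a b d) u v =
      (d - 1) * (d ^ 2 / (a + b) ^ 2) *
        (k1 * u ^ (a + b) + 2 * k2 * u ^ a * v ^ b + k3 * v ^ (a + b)) ^ (2 * (d / (a + b)) - 2) *
        (2 * k1 * k2 * (a + b) * b * (b - 1) * (u ^ (a + b + a - 1) * v ^ (b - 1)) +
          (a + b) ^ 2 * (a + b - 1) * k1 * k3 * (u ^ (a + b - 1) * v ^ (a + b - 1)) -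
          4 * a * b * k2 ^ 2 * (u ^ (2 * a - 1) * v ^ (2 * b - 1)) +
          2 * k2 * k3 * (a + b) * a * (a - 1) * (u ^ (a - 1) * v ^ (a + b + b - 1))) / (u * v) := by
  have hG := hGall u v hu hv
  have hGp1 : (k1 * u ^ (a + b) + 2 * k2 * u ^ a * v ^ b + k3 * v ^ (a + b)) ^ (d / (a + b) - 1)
      = (k1 * u ^ (a + b) + 2 * k2 * u ^ a * v ^ b + k3 * v ^ (a + b)) ^ (d / (a + b) - 1 - 1)
        * (k1 * u ^ (a + b) + 2 * k2 * u ^ a * v ^ b + k3 * v ^ (a + b)) := by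
    conv_lhs => rw [show d / (a + b) - 1 = d / (a + b) - 1 - 1 + 1 by ring,
      Real.rpow_add_one hG.ne']
  have hGp2 : (k1 * u ^ (a + b) + 2 * k2 * u ^ a * v ^ b + k3 * v ^ (a + b)) ^
        (2 * (d / (a + b)) - 2)
      = (k1 * u ^ (a + b) + 2 * k2 * u ^ a * v ^ b + k3 * v ^ (a + b)) ^ (d / (a + b) - 1 - 1)
        * (k1 * u ^ (a + b) + 2 * k2 * u ^ a * v ^ b + k3 * v ^ (a + b)) ^ (d / (a + b) - 1 - 1)
        * (k1 * u ^ (a + b) + 2 * k2 * u ^ a * v ^ b + k3 * v ^ (a + b))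
        * (k1 * u ^ (a + b) + 2 * k2 * u ^ a * v ^ b + k3 * v ^ (a + b)) := by
    conv_lhs => rw [show 2 * (d / (a + b)) - 2
        = (d / (a + b) - 1 - 1) + (d / (a + b) - 1 - 1) + 1 + 1 by ring,
      Real.rpow_add_one hG.ne', Real.rpow_add_one hG.ne', Real.rpow_add hG]
  have m1 : u ^ (a + b) = u ^ a * u ^ b := Real.rpow_add hu a b
  have m2 : u ^ (a + b - 1) = u ^ a * u ^ b / u := by
    rw [Real.rpow_sub_one hu.ne', Real.rpow_add hu]
  have m3 : u ^ (a - 1) = u ^ a / u := Real.rpow_sub_one hu.ne' a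
  have m4 : u ^ (a + b - 1 - 1) = u ^ a * u ^ b / u / u := by
    rw [Real.rpow_sub_one hu.ne', Real.rpow_sub_one hu.ne', Real.rpow_add hu]
  have m5 : u ^ (a - 1 - 1) = u ^ a / u / u := by
    rw [Real.rpow_sub_one hu.ne', Real.rpow_sub_one hu.ne']
  have m6 : u ^ (a + b + a - 1) = u ^ a * u ^ b * u ^ a / u := by
    rw [Real.rpow_sub_one hu.ne', Real.rpow_add hu, Real.rpow_add hu]
  have m7 : u ^ (2 * a - 1) = u ^ a * u ^ a / u := by
    rw [Real.rpow_sub_one hu.ne', show 2 * a = a + a by ring, Real.rpow_add hu]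
  have n1 : v ^ (a + b) = v ^ a * v ^ b := Real.rpow_add hv a b
  have n2 : v ^ (a + b - 1) = v ^ a * v ^ b / v := by
    rw [Real.rpow_sub_one hv.ne', Real.rpow_add hv]
  have n3 : v ^ (b - 1) = v ^ b / v := Real.rpow_sub_one hv.ne' b
  have n4 : v ^ (a + b - 1 - 1) = v ^ a * v ^ b / v / v := by
    rw [Real.rpow_sub_one hv.ne', Real.rpow_sub_one hv.ne', Real.rpow_add hv]
  have n5 : v ^ (b - 1 - 1) = v ^ b / v / v := by
    rw [Real.rpow_sub_one hv.ne', Real.rpow_sub_one hv.ne']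
  have n6 : v ^ (a + b + b - 1) = v ^ a * v ^ b * v ^ b / v := by
    rw [Real.rpow_sub_one hv.ne', Real.rpow_add hv, Real.rpow_add hv]
  have n7 : v ^ (2 * b - 1) = v ^ b * v ^ b / v := by
    rw [Real.rpow_sub_one hv.ne', show 2 * b = b + b by ring, Real.rpow_add hv]
  rw [hessDet, pduu_PKad k1 k2 k3 a b d hu hv hGall, pdvv_PKad k1 k2 k3 a b d hu hv hGall,
    pduv_PKad k1 k2 k3 a b d hu hv hGall, hGp1, hGp2]
  generalize (k1 * u ^ (a + b) + 2 * k2 * u ^ a * v ^ b + k3 * v ^ (a + b)) ^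
      (d / (a + b) - 1 - 1) = W
  rw [m2, m3, m4, m5, m6, m7, m1, n2, n3, n4, n5, n6, n7, n1]
  field_simp
  ring


private lemma two_rpow_ne {p q : ℝ} (h : p ≠ q) : (2:ℝ) ^ p ≠ (2:ℝ) ^ q := by
  rcases lt_or_gt_of_ne h with h' | h'
  · exact ne_of_lt ((Real.rpow_lt_rpow_left_iff one_lt_two).mpr h')
  · exact (ne_of_lt ((Real.rpow_lt_rpow_left_iff one_lt_two).mpr h')).symm


private lemma four_rpow (x : ℝ) : (4:ℝ) ^ x = (2:ℝ) ^ x * (2:ℝ) ^ x := by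
  rw [show (4:ℝ) = 2 * 2 by norm_num, Real.mul_rpow (by norm_num) (by norm_num)]


private lemma eight_rpow (x : ℝ) : (8:ℝ) ^ x = (2:ℝ) ^ x * ((2:ℝ) ^ x * (2:ℝ) ^ x) := by
  rw [show (8:ℝ) = 2 * (2 * 2) by norm_num, Real.mul_rpow (by norm_num) (by norm_num),
    Real.mul_rpow (by norm_num) (by norm_num)]


private lemma vand3 {c1 c2 c3 p q r : ℝ} (hpq : p ≠ q) (hpr : p ≠ r) (hqr : q ≠ r)
    (h : ∀ t : ℝ, 0 < t → c1 * t ^ p + c2 * t ^ q + c3 * t ^ r = 0) :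
    c1 = 0 ∧ c2 = 0 ∧ c3 = 0 := by
  have e0 := h 1 one_pos
  have e1 := h 2 two_pos
  have e2 := h 4 (by norm_num)
  rw [Real.one_rpow, Real.one_rpow, Real.one_rpow] at e0
  rw [four_rpow, four_rpow, four_rpow] at e2
  set X := (2:ℝ) ^ p with hX
  set Y := (2:ℝ) ^ q with hY
  set Z := (2:ℝ) ^ r with hZ
  have hXY : X - Y ≠ 0 := sub_ne_zero.mpr (two_rpow_ne hpq)
  have hXZ : X - Z ≠ 0 := sub_ne_zero.mpr (two_rpow_ne hpr)
  have hYZ : Y - Z ≠ 0 := sub_ne_zero.mpr (two_rpow_ne hqr)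
  have hc1 : c1 * ((X - Y) * (X - Z)) = 0 := by linear_combination e2 - (Y + Z) * e1 + Y * Z * e0
  have hc2 : c2 * ((Y - X) * (Y - Z)) = 0 := by linear_combination e2 - (X + Z) * e1 + X * Z * e0
  have h1 : c1 = 0 := by
    rcases mul_eq_zero.mp hc1 with h' | h'
    · exact h'
    · exact absurd h' (mul_ne_zero hXY hXZ)
  have h2 : c2 = 0 := by
    rcases mul_eq_zero.mp hc2 with h' | h'
    · exact h'
    · exact absurd h' (mul_ne_zero (fun hc => hXY (by linarith [sub_eq_zero.mp hc] ; )) hYZ)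
  refine ⟨h1, h2, by linarith⟩


private lemma vand4 {c1 c2 c3 c4 p q r w : ℝ} (hrp : r ≠ p) (hrq : r ≠ q) (hrw : r ≠ w)
    (h : ∀ t : ℝ, 0 < t → c1 * t ^ p + c2 * t ^ q + c3 * t ^ r + c4 * t ^ w = 0) :
    c3 = 0 := by
  have e0 := h 1 one_pos
  have e1 := h 2 two_pos
  have e2 := h 4 (by norm_num)
  have e3 := h 8 (by norm_num)
  rw [Real.one_rpow, Real.one_rpow, Real.one_rpow, Real.one_rpow] at e0
  rw [four_rpow, four_rpow, four_rpow, four_rpow] at e2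
  rw [eight_rpow, eight_rpow, eight_rpow, eight_rpow] at e3
  set X := (2:ℝ) ^ p
  set Y := (2:ℝ) ^ q
  set Z := (2:ℝ) ^ r
  set V := (2:ℝ) ^ w
  have hZX : Z - X ≠ 0 := sub_ne_zero.mpr (two_rpow_ne hrp)
  have hZY : Z - Y ≠ 0 := sub_ne_zero.mpr (two_rpow_ne hrq)
  have hZV : Z - V ≠ 0 := sub_ne_zero.mpr (two_rpow_ne hrw)
  have hc3 : c3 * ((Z - X) * ((Z - Y) * (Z - V))) = 0 := by
    linear_combination e3 - (X + Y + V) * e2 + (X * Y + X * V + Y * V) * e1 - X * Y * V * e0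
  rcases mul_eq_zero.mp hc3 with h' | h'
  · exact h'
  · exact absurd h' (mul_ne_zero hZX (mul_ne_zero hZY hZV))


/-- The Kadiyala surface is developable (its Gaussian curvature vanishes at every point of
`(0,∞)²`) if and only if `δ = 1`, or `k₂ = 0` and `β₁ + β₂ = 1`, or `β₁ = β₂ = 1`
and `k₂² − k₁k₃ = 0`. -/
theorem kadiyala_developable_iff
    (k₁ k₂ k₃ β₁ β₂ δ : ℝ)
    (hsum : k₁ + 2 * k₂ + k₃ = 1) (hk₁ : 0 ≤ k₁) (hk₂ : 0 ≤ k₂) (hk₃ : 0 ≤ k₃)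
    (h12 : ¬(k₁ = 0 ∧ k₂ = 0)) (h23 : ¬(k₂ = 0 ∧ k₃ = 0))
    (hβ₁ : 0 < β₁ * (β₁ + β₂)) (hβ₂ : 0 < β₂ * (β₁ + β₂)) (hδ : 0 < δ) :
    (∀ u v : ℝ, 0 < u → 0 < v → gaussK (PKad k₁ k₂ k₃ β₁ β₂ δ) u v = 0) ↔
      (δ = 1 ∨ (k₂ = 0 ∧ β₁ + β₂ = 1) ∨ (β₁ = 1 ∧ β₂ = 1 ∧ k₂ ^ 2 - k₁ * k₃ = 0)) := by
  have hs : β₁ + β₂ ≠ 0 := by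
    intro h; rw [h, mul_zero] at hβ₁; exact lt_irrefl 0 hβ₁
  have ha : β₁ ≠ 0 := by
    intro h; rw [h, zero_mul] at hβ₁; exact lt_irrefl 0 hβ₁
  have hb : β₂ ≠ 0 := by
    intro h; rw [h, zero_mul] at hβ₂; exact lt_irrefl 0 hβ₂
  have hab : 0 < β₁ * β₂ := by nlinarith [mul_pos hβ₁ hβ₂, sq_nonneg (β₁ + β₂)]
  have hGall : ∀ x y : ℝ, 0 < x → 0 < y →
      0 < k₁ * x ^ (β₁ + β₂) + 2 * k₂ * x ^ β₁ * y ^ β₂ + k₃ * y ^ (β₁ + β₂) := by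
    intro x y hx hy
    have t1 : 0 ≤ k₁ * x ^ (β₁ + β₂) := mul_nonneg hk₁ (Real.rpow_nonneg hx.le _)
    have t2 : 0 ≤ 2 * k₂ * x ^ β₁ * y ^ β₂ :=
      mul_nonneg (mul_nonneg (by linarith) (Real.rpow_nonneg hx.le _))
        (Real.rpow_nonneg hy.le _)
    have t3 : 0 ≤ k₃ * y ^ (β₁ + β₂) := mul_nonneg hk₃ (Real.rpow_nonneg hy.le _)
    by_cases h1 : k₁ = 0
    · by_cases h2 : k₂ = 0
      · have h3 : k₃ = 1 := by rw [h1, h2] at hsum; linarith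
        have : 0 < k₃ * y ^ (β₁ + β₂) :=
          mul_pos (by rw [h3]; norm_num) (Real.rpow_pos_of_pos hy _)
        linarith
      · have : 0 < 2 * k₂ * x ^ β₁ * y ^ β₂ :=
          mul_pos (mul_pos (by linarith [lt_of_le_of_ne hk₂ (Ne.symm h2)])
            (Real.rpow_pos_of_pos hx _)) (Real.rpow_pos_of_pos hy _)
        linarith
    · have : 0 < k₁ * x ^ (β₁ + β₂) :=
        mul_pos (lt_of_le_of_ne hk₁ (Ne.symm h1)) (Real.rpow_pos_of_pos hx _)
      linarith
  constructor
  · intro h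
    by_cases hδ1 : δ = 1
    · exact Or.inl hδ1
    have hC : ∀ u v : ℝ, 0 < u → 0 < v →
        2 * k₁ * k₂ * (β₁ + β₂) * β₂ * (β₂ - 1) * (u ^ (β₁ + β₂ + β₁ - 1) * v ^ (β₂ - 1)) +
          (β₁ + β₂) ^ 2 * (β₁ + β₂ - 1) * k₁ * k₃ *
            (u ^ (β₁ + β₂ - 1) * v ^ (β₁ + β₂ - 1)) -
          4 * β₁ * β₂ * k₂ ^ 2 * (u ^ (2 * β₁ - 1) * v ^ (2 * β₂ - 1)) +
          2 * k₂ * k₃ * (β₁ + β₂) * β₁ * (β₁ - 1) *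
            (u ^ (β₁ - 1) * v ^ (β₁ + β₂ + β₂ - 1)) = 0 := by
      intro u v hu hv
      have h0 := h u v hu hv
      simp only [gaussK] at h0
      have hden : ((1 : ℝ) + pdu (PKad k₁ k₂ k₃ β₁ β₂ δ) u v ^ 2 +
          pdv (PKad k₁ k₂ k₃ β₁ β₂ δ) u v ^ 2) ^ 2 ≠ 0 := by positivity
      have hd : hessDet (PKad k₁ k₂ k₃ β₁ β₂ δ) u v = 0 :=
        (div_eq_zero_iff.mp h0).resolve_right hden
      rw [hess_eq k₁ k₂ k₃ β₁ β₂ δ hu hv hs hGall] at hd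
      have huv : u * v ≠ 0 := by positivity
      have h2 := (div_eq_zero_iff.mp hd).resolve_right huv
      have h3 : (δ - 1) * (δ ^ 2 / (β₁ + β₂) ^ 2) *
          (k₁ * u ^ (β₁ + β₂) + 2 * k₂ * u ^ β₁ * v ^ β₂ + k₃ * v ^ (β₁ + β₂)) ^
            (2 * (δ / (β₁ + β₂)) - 2) ≠ 0 :=
        mul_ne_zero (mul_ne_zero (sub_ne_zero.mpr hδ1)
          (div_ne_zero (pow_ne_zero 2 hδ.ne') (pow_ne_zero 2 hs)))
          (Real.rpow_pos_of_pos (hGall u v hu hv) _).ne'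
      exact (mul_eq_zero.mp h2).resolve_left h3
    have hC1 : ∀ t : ℝ, 0 < t →
        2 * k₁ * k₂ * (β₁ + β₂) * β₂ * (β₂ - 1) * t ^ (β₁ + β₂ + β₁ - 1) +
          (β₁ + β₂) ^ 2 * (β₁ + β₂ - 1) * k₁ * k₃ * t ^ (β₁ + β₂ - 1) +
          -(4 * β₁ * β₂ * k₂ ^ 2) * t ^ (2 * β₁ - 1) +
          2 * k₂ * k₃ * (β₁ + β₂) * β₁ * (β₁ - 1) * t ^ (β₁ - 1) = 0 := by
      intro t ht
      have h0 := hC t 1 ht one_pos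
      simp only [Real.one_rpow, mul_one] at h0
      linear_combination h0
    by_cases hk2 : k₂ = 0
    · subst hk2
      have h0 := hC1 1 one_pos
      simp only [Real.one_rpow, mul_one] at h0
      have hk1 : k₁ ≠ 0 := fun hc => h12 ⟨hc, rfl⟩
      have hk3 : k₃ ≠ 0 := fun hc => h23 ⟨rfl, hc⟩
      have hfac : (β₁ + β₂ - 1) * ((β₁ + β₂) ^ 2 * (k₁ * k₃)) = 0 := by linear_combination h0
      rcases mul_eq_zero.mp hfac with h' | h'
      · exact Or.inr (Or.inl ⟨rfl, by linarith⟩)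
      · exact absurd h' (mul_ne_zero (pow_ne_zero 2 hs) (mul_ne_zero hk1 hk3))
    · have hk2sq : 0 < k₂ ^ 2 := lt_of_le_of_ne (sq_nonneg k₂) (Ne.symm (pow_ne_zero 2 hk2))
      by_cases hab' : β₁ = β₂
      · subst hab'
        have hC1' : ∀ t : ℝ, 0 < t →
            (2 * k₁ * k₂ * (β₁ + β₁) * β₁ * (β₁ - 1)) * t ^ (β₁ + β₁ + β₁ - 1) +
              ((β₁ + β₁) ^ 2 * (β₁ + β₁ - 1) * k₁ * k₃ + -(4 * β₁ * β₁ * k₂ ^ 2)) *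
                t ^ (2 * β₁ - 1) +
              (2 * k₂ * k₃ * (β₁ + β₁) * β₁ * (β₁ - 1)) * t ^ (β₁ - 1) = 0 := by
          intro t ht
          have h0 := hC1 t ht
          rw [show β₁ + β₁ - 1 = 2 * β₁ - 1 by ring] at h0
          linear_combination h0
        have hd1 : β₁ + β₁ + β₁ - 1 ≠ 2 * β₁ - 1 := fun hc => ha (by linarith)
        have hd2 : β₁ + β₁ + β₁ - 1 ≠ β₁ - 1 := fun hc => ha (by linarith)
        have hd3 : 2 * β₁ - 1 ≠ β₁ - 1 := fun hc => ha (by linarith)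
        obtain ⟨hc1, hc2, hc3⟩ := vand3 hd1 hd2 hd3 hC1'
        have hA : k₁ * (β₁ - 1) = 0 := by
          have hx : (k₁ * (β₁ - 1)) * (2 * k₂ * ((β₁ + β₁) * β₁)) = 0 := by
            linear_combination hc1
          rcases mul_eq_zero.mp hx with h' | h'
          · exact h'
          · exact absurd h' (mul_ne_zero (mul_ne_zero two_ne_zero hk2)
              (mul_ne_zero (fun hc => ha (by linarith)) ha))
        have hMid : (β₁ + β₁ - 1) * (k₁ * k₃) = k₂ ^ 2 := by
          have hx : ((β₁ + β₁ - 1) * (k₁ * k₃) - k₂ ^ 2) * (4 * (β₁ * β₁)) = 0 := by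
            linear_combination hc2
          rcases mul_eq_zero.mp hx with h' | h'
          · linarith
          · exact absurd h' (mul_ne_zero four_ne_zero (mul_ne_zero ha ha))
        have hk1 : k₁ ≠ 0 := by
          intro hc
          have : k₂ ^ 2 = 0 := by rw [← hMid, hc]; ring
          exact pow_ne_zero 2 hk2 this
        have hβ11 : β₁ = 1 := by
          rcases mul_eq_zero.mp hA with h' | h'
          · exact absurd h' hk1
          · linarith
        refine Or.inr (Or.inr ⟨hβ11, hβ11, ?_⟩)
        rw [hβ11] at hMid
        linarith
      · exfalso
        have hd1 : 2 * β₁ - 1 ≠ β₁ + β₂ + β₁ - 1 := fun hc => hb (by linarith)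
        have hd2 : 2 * β₁ - 1 ≠ β₁ + β₂ - 1 := fun hc => hab' (by linarith)
        have hd3 : 2 * β₁ - 1 ≠ β₁ - 1 := fun hc => ha (by linarith)
        have hc3 := vand4 hd1 hd2 hd3 hC1
        nlinarith [mul_pos hab hk2sq]
  · rintro (hδ1 | ⟨hk2, hs1⟩ | ⟨hb1, hb2, hk13⟩) u v hu hv <;>
      [skip; skip; skip]
    all_goals {
      have hd : hessDet (PKad k₁ k₂ k₃ β₁ β₂ δ) u v = 0 := by
        rw [hess_eq k₁ k₂ k₃ β₁ β₂ δ hu hv hs hGall]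
        refine div_eq_zero_iff.mpr (Or.inl ?_)
        first
        | (rw [hδ1]; ring)
        | (rw [hk2, hs1]; ring)
        | (refine mul_eq_zero_of_right _ ?_
           rw [hb1, hb2]
           rw [show (1:ℝ) + 1 - 1 = 2 * 1 - 1 by norm_num]
           linear_combination (-(4 * (u ^ (2 * (1:ℝ) - 1) * v ^ (2 * (1:ℝ) - 1)))) * hk13)
      simp only [gaussK]
      rw [hd]
      exact zero_div _ }
end

section
/- Let P(u,v) = (k₁·u^{β₁+β₂} + 2k₂·u^{β₁}·v^{β₂} + k₃·v^{β₁+β₂})^{δ/(β₁+β₂)} be a 2-input Kadiyala production function on (0,∞)² with parameters satisfying (★★). If δ = 1, then the Gaussian curvature of the graph surface {(u,v,P(u,v)) : u>0, v>0} vanishes at every point of (0,∞)², i.e., the Kadiyala surface is developable. -/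
/-!
For `δ = 1` the Kadiyala function is positively homogeneous of degree one, so on the open
quadrant it is the perspective `P(x, y) = y φ(x / y)` of the smooth function `φ = P(·, 1)`.
For any twice differentiable `φ` the second partials of the perspective are
`φ''/y`, `-x φ''/y²` and `x² φ''/y³`, all evaluated at `x / y`, so its Hessian determinant,
and with it the Gaussian curvature of the graph, vanishes identically.
-/

open Real

open Set Filter

section QuadrantCongr

variable {f g : ℝ → ℝ → ℝ}

theorem pdu_congr_of_eqOn_quadrant (hfg : ∀ x y, 0 < x → 0 < y → f x y = g x y)
    {x y : ℝ} (hx : 0 < x) (hy : 0 < y) : pdu f x y = pdu g x y :=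
  EventuallyEq.deriv_eq <| eventually_of_mem (Ioi_mem_nhds hx) fun _ hx' => hfg _ y hx' hy

theorem pdv_congr_of_eqOn_quadrant (hfg : ∀ x y, 0 < x → 0 < y → f x y = g x y)
    {x y : ℝ} (hx : 0 < x) (hy : 0 < y) : pdv f x y = pdv g x y :=
  EventuallyEq.deriv_eq <| eventually_of_mem (Ioi_mem_nhds hy) fun _ hy' => hfg x _ hx hy'

theorem hessDet_congr_of_eqOn_quadrant (hfg : ∀ x y, 0 < x → 0 < y → f x y = g x y)
    {x y : ℝ} (hx : 0 < x) (hy : 0 < y) : hessDet f x y = hessDet g x y := by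
  have hu := fun x y => pdu_congr_of_eqOn_quadrant hfg (x := x) (y := y)
  have hv := fun x y => pdv_congr_of_eqOn_quadrant hfg (x := x) (y := y)
  rw [hessDet, hessDet, pdu_congr_of_eqOn_quadrant hu hx hy,
    pdv_congr_of_eqOn_quadrant hv hx hy, pdv_congr_of_eqOn_quadrant hu hx hy]

end QuadrantCongr

section Perspective

variable {ψ φ : ℝ → ℝ} {x y : ℝ}

theorem hasDerivAt_comp_div_const (hψ : DifferentiableAt ℝ ψ (x / y)) :
    HasDerivAt (fun x => ψ (x / y)) (deriv ψ (x / y) / y) x :=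
  (hψ.hasDerivAt.comp x ((hasDerivAt_id' x).div_const y)).congr_deriv (by ring)

theorem hasDerivAt_comp_const_div (hψ : DifferentiableAt ℝ ψ (x / y)) (hy : y ≠ 0) :
    HasDerivAt (fun y => ψ (x / y)) (-(x / y ^ 2) * deriv ψ (x / y)) y := by
  have hdiv : HasDerivAt (fun y => x / y) (-(x / y ^ 2)) y := by
    simpa [div_eq_mul_inv] using (hasDerivAt_inv hy).const_mul x
  exact (hψ.hasDerivAt.comp y hdiv).congr_deriv (by ring)

noncomputable def perspective (φ : ℝ → ℝ) (x y : ℝ) : ℝ := y * φ (x / y)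

theorem pdu_perspective (hφ : DifferentiableAt ℝ φ (x / y)) (hy : y ≠ 0) :
    pdu (perspective φ) x y = deriv φ (x / y) := by
  refine ((hasDerivAt_comp_div_const hφ).const_mul y).deriv.trans ?_
  field_simp

theorem pdv_perspective (hφ : DifferentiableAt ℝ φ (x / y)) (hy : y ≠ 0) :
    pdv (perspective φ) x y = φ (x / y) - x / y * deriv φ (x / y) := by
  refine ((hasDerivAt_id' y).mul (hasDerivAt_comp_const_div hφ hy)).deriv.trans ?_
  field_simp
  ring

theorem hessDet_perspective (hφ : DifferentiableOn ℝ φ (Ioi 0))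
    (hφ' : DifferentiableOn ℝ (deriv φ) (Ioi 0)) (hx : 0 < x) (hy : 0 < y) :
    hessDet (perspective φ) x y = 0 := by
  have hdiff : ∀ {ψ : ℝ → ℝ}, DifferentiableOn ℝ ψ (Ioi 0) → ∀ x y : ℝ, 0 < x → 0 < y →
      DifferentiableAt ℝ ψ (x / y) := fun hψ x y hx hy =>
    hψ.differentiableAt (Ioi_mem_nhds (div_pos hx hy))
  have hu : ∀ x y, 0 < x → 0 < y → pdu (perspective φ) x y = deriv φ (x / y) :=
    fun x y hx hy => pdu_perspective (hdiff hφ x y hx hy) hy.ne'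
  have hv : ∀ x y, 0 < x → 0 < y →
      pdv (perspective φ) x y = φ (x / y) - x / y * deriv φ (x / y) :=
    fun x y hx hy => pdv_perspective (hdiff hφ x y hx hy) hy.ne'
  have hφxy := hdiff hφ x y hx hy
  have hφ'xy := hdiff hφ' x y hx hy
  have huu : pdu (pdu (perspective φ)) x y = deriv (deriv φ) (x / y) / y := by
    rw [pdu_congr_of_eqOn_quadrant hu hx hy]
    exact (hasDerivAt_comp_div_const hφ'xy).deriv
  have huv : pdv (pdu (perspective φ)) x y = -(x / y ^ 2) * deriv (deriv φ) (x / y) := by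
    rw [pdv_congr_of_eqOn_quadrant hu hx hy]
    exact (hasDerivAt_comp_const_div hφ'xy hy.ne').deriv
  have hvv : pdv (pdv (perspective φ)) x y = x ^ 2 / y ^ 3 * deriv (deriv φ) (x / y) := by
    rw [pdv_congr_of_eqOn_quadrant hv hx hy]
    have hid : DifferentiableAt ℝ id (x / y) := differentiableAt_id
    refine ((hasDerivAt_comp_const_div hφxy hy.ne').sub
      ((hasDerivAt_comp_const_div hid hy.ne').mul
        (hasDerivAt_comp_const_div hφ'xy hy.ne'))).deriv.trans ?_
    simp only [deriv_id, id]
    field_simp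
    ring
  rw [hessDet, huu, huv, hvv]
  field_simp
  ring

end Perspective

theorem eq_perspective_of_homogeneous {f : ℝ → ℝ → ℝ}
    (hf : ∀ c x y, 0 < c → 0 < x → 0 < y → f (c * x) (c * y) = c * f x y)
    {x y : ℝ} (hx : 0 < x) (hy : 0 < y) : f x y = perspective (fun t => f t 1) x y := by
  simpa [perspective, mul_div_cancel₀ x hy.ne'] using hf y (x / y) 1 hy (div_pos hx hy) one_pos

theorem hessDet_eq_zero_of_homogeneous {f : ℝ → ℝ → ℝ}
    (hf : ∀ c x y, 0 < c → 0 < x → 0 < y → f (c * x) (c * y) = c * f x y)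
    (hφ : DifferentiableOn ℝ (fun t => f t 1) (Ioi 0))
    (hφ' : DifferentiableOn ℝ (deriv fun t => f t 1) (Ioi 0))
    {x y : ℝ} (hx : 0 < x) (hy : 0 < y) : hessDet f x y = 0 := by
  rw [hessDet_congr_of_eqOn_quadrant (fun _ _ => eq_perspective_of_homogeneous hf) hx hy]
  exact hessDet_perspective hφ hφ' hx hy

section Kadiyala

variable {k₁ k₂ k₃ β₁ β₂ : ℝ}

theorem kadiyala_base_pos (hsum : k₁ + 2 * k₂ + k₃ = 1) (hk₁ : 0 ≤ k₁) (hk₂ : 0 ≤ k₂)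
    (hk₃ : 0 ≤ k₃) {x y : ℝ} (hx : 0 < x) (hy : 0 < y) :
    0 < k₁ * x ^ (β₁ + β₂) + 2 * k₂ * x ^ β₁ * y ^ β₂ + k₃ * y ^ (β₁ + β₂) := by
  have hk : 0 < k₁ ∨ 0 < k₂ ∨ 0 < k₃ := by
    by_contra! h
    linarith [h.1, h.2.1, h.2.2]
  rcases hk with hk | hk | hk <;> positivity

theorem PKad_mul_mul (hk₁ : 0 ≤ k₁) (hk₂ : 0 ≤ k₂) (hk₃ : 0 ≤ k₃) (hs : β₁ + β₂ ≠ 0) (δ : ℝ)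
    {c x y : ℝ} (hc : 0 < c) (hx : 0 < x) (hy : 0 < y) :
    PKad k₁ k₂ k₃ β₁ β₂ δ (c * x) (c * y) = c ^ δ * PKad k₁ k₂ k₃ β₁ β₂ δ x y := by
  have hbase : k₁ * (c * x) ^ (β₁ + β₂) + 2 * k₂ * (c * x) ^ β₁ * (c * y) ^ β₂
        + k₃ * (c * y) ^ (β₁ + β₂)
      = c ^ (β₁ + β₂) * (k₁ * x ^ (β₁ + β₂) + 2 * k₂ * x ^ β₁ * y ^ β₂ + k₃ * y ^ (β₁ + β₂)) := by
    simp only [mul_rpow hc.le hx.le, mul_rpow hc.le hy.le, rpow_add hc]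
    ring
  simp only [PKad]
  rw [hbase, mul_rpow (by positivity) (by positivity), ← rpow_mul hc.le, mul_div_cancel₀ δ hs]

theorem contDiffOn_PKad_apply_one (hsum : k₁ + 2 * k₂ + k₃ = 1) (hk₁ : 0 ≤ k₁) (hk₂ : 0 ≤ k₂)
    (hk₃ : 0 ≤ k₃) (δ : ℝ) {n : WithTop ℕ∞} :
    ContDiffOn ℝ n (fun t => PKad k₁ k₂ k₃ β₁ β₂ δ t 1) (Ioi 0) := by
  intro t (ht : 0 < t)
  have hpow : ∀ p : ℝ, ContDiffAt ℝ n (fun t : ℝ => t ^ p) t :=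
    fun _ => contDiffAt_rpow_const_of_ne ht.ne'
  have hbase : ContDiffAt ℝ n (fun t : ℝ => k₁ * t ^ (β₁ + β₂) + 2 * k₂ * t ^ β₁ * (1 : ℝ) ^ β₂
      + k₃ * (1 : ℝ) ^ (β₁ + β₂)) t := by
    fun_prop
  have hbase_ne : k₁ * t ^ (β₁ + β₂) + 2 * k₂ * t ^ β₁ * (1 : ℝ) ^ β₂
      + k₃ * (1 : ℝ) ^ (β₁ + β₂) ≠ 0 := (kadiyala_base_pos hsum hk₁ hk₂ hk₃ ht one_pos).ne'
  exact (hbase.rpow_const_of_ne hbase_ne).contDiffWithinAt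

end Kadiyala

theorem kadiyala_constant_returns_developable_general
    (k₁ k₂ k₃ β₁ β₂ δ : ℝ)
    (hsum : k₁ + 2 * k₂ + k₃ = 1) (hk₁ : 0 ≤ k₁) (hk₂ : 0 ≤ k₂) (hk₃ : 0 ≤ k₃)
    (hβ₁ : 0 < β₁ * (β₁ + β₂)) (hδ1 : δ = 1) :
    ∀ u v : ℝ, 0 < u → 0 < v → gaussK (PKad k₁ k₂ k₃ β₁ β₂ δ) u v = 0 := by
  subst hδ1
  intro u v hu hv
  have hs : β₁ + β₂ ≠ 0 := right_ne_zero_of_mul hβ₁.ne'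
  have hhom : ∀ c x y, 0 < c → 0 < x → 0 < y →
      PKad k₁ k₂ k₃ β₁ β₂ 1 (c * x) (c * y) = c * PKad k₁ k₂ k₃ β₁ β₂ 1 x y :=
    fun c x y hc hx hy => by simpa using PKad_mul_mul hk₁ hk₂ hk₃ hs 1 hc hx hy
  have hφ : ContDiffOn ℝ 2 (fun t => PKad k₁ k₂ k₃ β₁ β₂ 1 t 1) (Ioi 0) :=
    contDiffOn_PKad_apply_one hsum hk₁ hk₂ hk₃ 1
  rw [gaussK, hessDet_eq_zero_of_homogeneous hhom (hφ.differentiableOn two_ne_zero)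
    ((hφ.deriv_of_isOpen isOpen_Ioi (by norm_num)).differentiableOn one_ne_zero) hu hv, zero_div]

/-- If the Kadiyala production function has constant returns to scale (`δ = 1`), then the
Kadiyala surface is developable: its Gaussian curvature vanishes at every point of `(0,∞)²`. -/
theorem kadiyala_constant_returns_developable
    (k₁ k₂ k₃ β₁ β₂ δ : ℝ)
    (hsum : k₁ + 2 * k₂ + k₃ = 1) (hk₁ : 0 ≤ k₁) (hk₂ : 0 ≤ k₂) (hk₃ : 0 ≤ k₃)
    (h12 : ¬(k₁ = 0 ∧ k₂ = 0)) (h23 : ¬(k₂ = 0 ∧ k₃ = 0))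
    (hβ₁ : 0 < β₁ * (β₁ + β₂)) (hβ₂ : 0 < β₂ * (β₁ + β₂)) (hδ : 0 < δ) (hδ1 : δ = 1) :
    ∀ u v : ℝ, 0 < u → 0 < v → gaussK (PKad k₁ k₂ k₃ β₁ β₂ δ) u v = 0 :=
  kadiyala_constant_returns_developable_general k₁ k₂ k₃ β₁ β₂ δ hsum hk₁ hk₂ hk₃ hβ₁ hδ1
end

section
/- Let P(u,v) = (k₁·u^{β₁+β₂} + 2k₂·u^{β₁}·v^{β₂} + k₃·v^{β₁+β₂})^{δ/(β₁+β₂)} be a 2-input Kadiyala production function on (0,∞)² with parameters satisfying (★★). If the Gaussian curvature of the graph surface {(u,v,P(u,v)) : u>0, v>0} vanishes at every point of (0,∞)² and δ ≠ 1, then either (k₂ = 0 and β₁+β₂ = 1) or (β₁ = β₂ = 1 and k₁k₃ = k₂²); in particular, P is then a perfect substitutes production function, i.e., of the form P(u,v) = (a·u + b·v)^δ for some constants a, b ≥ 0. -/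
/-!
Write `P = Q ^ s` with `Q = k₁u^(β₁+β₂) + 2k₂u^β₁v^β₂ + k₃v^(β₁+β₂)` and `s = δ / (β₁ + β₂)`.
The Hessian determinant of `Q ^ s` is
`s² Q^(2s-3) ((s - 1)(Q_u² Q_vv - 2 Q_u Q_v Q_uv + Q_v² Q_uu) + Q (Q_uu Q_vv - Q_uv²))`, and since
`Q` is a sum of three monomials on which `u ∂ᵤ` and `v ∂ᵥ` act diagonally, `(uv)²` times the
bracket is `(δ - 1) Q F(m₁, m₂, m₃)` for an explicit quadratic form `F` in the monomials. So for
`δ ≠ 1` the form vanishes on the quadrant. On the line `v = 1` it is a combination of `u^(2β₁+β₂)`,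
`u^(β₁+β₂)`, `u^(2β₁)`, `u^β₁`, and power functions with distinct exponents are linearly
independent (applying `u d/du` repeatedly and evaluating at `u = 1` gives a Vandermonde system).
Comparing coefficients leaves `k₂ = 0, β₁ + β₂ = 1` or `β₁ = β₂ = 1, k₁k₃ = k₂²`, and in both cases
`Q` is `(a u + b v)^(β₁+β₂)`.
-/

open Real

open Set Filter Topology

section PowerFunctions

variable {n : ℕ} {c p : Fin n → ℝ}

theorem sum_mul_mul_rpow_eq_zero (h : ∀ x : ℝ, 0 < x → ∑ i, c i * x ^ p i = 0) {x : ℝ}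
    (hx : 0 < x) : ∑ i, c i * p i * x ^ p i = 0 := by
  have hderiv : HasDerivAt (fun y => ∑ i, c i * y ^ p i) (∑ i, c i * (p i * x ^ (p i - 1))) x :=
    HasDerivAt.fun_sum fun i _ => (hasDerivAt_rpow_const (Or.inl hx.ne')).const_mul (c i)
  have hzero : (fun y => ∑ i, c i * y ^ p i) =ᶠ[𝓝 x] fun _ => 0 :=
    eventually_of_mem (Ioi_mem_nhds hx) h
  have hderiv_zero : ∑ i, c i * (p i * x ^ (p i - 1)) = 0 := by
    rw [← hderiv.deriv, hzero.deriv_eq, deriv_const]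
  calc ∑ i, c i * p i * x ^ p i = x * ∑ i, c i * (p i * x ^ (p i - 1)) := by
        rw [Finset.mul_sum]
        congr! 1 with i
        rw [rpow_sub_one hx.ne']
        field_simp
    _ = 0 := by rw [hderiv_zero, mul_zero]

theorem sum_mul_pow_mul_rpow_eq_zero (h : ∀ x : ℝ, 0 < x → ∑ i, c i * x ^ p i = 0) (k : ℕ)
    {x : ℝ} (hx : 0 < x) : ∑ i, c i * p i ^ k * x ^ p i = 0 := by
  induction k generalizing x with
  | zero => simpa using h x hx
  | succ k ih =>
    simpa only [pow_succ, mul_assoc] using sum_mul_mul_rpow_eq_zero (fun y hy => ih hy) hx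

theorem eq_zero_of_sum_mul_rpow_eq_zero (hp : Function.Injective p)
    (h : ∀ x : ℝ, 0 < x → ∑ i, c i * x ^ p i = 0) : c = 0 :=
  Matrix.eq_zero_of_forall_pow_sum_mul_pow_eq_zero hp fun k => by
    simpa using sum_mul_pow_mul_rpow_eq_zero h k one_pos

end PowerFunctions

theorem hessDet_eq_zero_of_gaussK_eq_zero {f : ℝ → ℝ → ℝ} {u v : ℝ} (h : gaussK f u v = 0) :
    hessDet f u v = 0 := by
  have hden : (1 + pdu f u v ^ 2 + pdv f u v ^ 2) ^ 2 ≠ 0 := by positivity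
  exact (div_eq_zero_iff.mp h).resolve_right hden

section PartialDerivatives

variable {U : Set (ℝ × ℝ)} {x y : ℝ}

theorem pdu_congr_s7 {f g : ℝ → ℝ → ℝ} (hU : IsOpen U) (hfg : ∀ a b, (a, b) ∈ U → f a b = g a b)
    (hxy : (x, y) ∈ U) : pdu f x y = pdu g x y := by
  have hnhds : ∀ᶠ t in 𝓝 x, (t, y) ∈ U :=
    (continuous_id.prodMk continuous_const).continuousAt.preimage_mem_nhds (hU.mem_nhds hxy)
  exact EventuallyEq.deriv_eq (hnhds.mono fun t ht => hfg t y ht)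

theorem pdv_congr_s7 {f g : ℝ → ℝ → ℝ} (hU : IsOpen U) (hfg : ∀ a b, (a, b) ∈ U → f a b = g a b)
    (hxy : (x, y) ∈ U) : pdv f x y = pdv g x y := by
  have hnhds : ∀ᶠ t in 𝓝 y, (x, t) ∈ U :=
    (continuous_const.prodMk continuous_id).continuousAt.preimage_mem_nhds (hU.mem_nhds hxy)
  exact EventuallyEq.deriv_eq (hnhds.mono fun t ht => hfg x t ht)

theorem hessDet_rpow {Q Qu Qv Quu Quv Qvv : ℝ → ℝ → ℝ} (s : ℝ) (hU : IsOpen U)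
    (hQ : ∀ a b, (a, b) ∈ U → 0 < Q a b)
    (hQu : ∀ a b, (a, b) ∈ U → HasDerivAt (fun t => Q t b) (Qu a b) a)
    (hQv : ∀ a b, (a, b) ∈ U → HasDerivAt (fun t => Q a t) (Qv a b) b)
    (hQuu : ∀ a b, (a, b) ∈ U → HasDerivAt (fun t => Qu t b) (Quu a b) a)
    (hQuv : ∀ a b, (a, b) ∈ U → HasDerivAt (fun t => Qu a t) (Quv a b) b)
    (hQvv : ∀ a b, (a, b) ∈ U → HasDerivAt (fun t => Qv a t) (Qvv a b) b)
    (hxy : (x, y) ∈ U) :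
    hessDet (fun u v => Q u v ^ s) x y = s ^ 2 * (Q x y ^ s) ^ 2 / Q x y ^ 3 *
      ((s - 1) * (Qu x y ^ 2 * Qvv x y - 2 * Qu x y * Qv x y * Quv x y + Qv x y ^ 2 * Quu x y) +
        Q x y * (Quu x y * Qvv x y - Quv x y ^ 2)) := by
  have hQ0 : ∀ a b, (a, b) ∈ U → ∀ r : ℝ, Q a b ≠ 0 ∨ 1 ≤ r := fun a b h _ => Or.inl (hQ a b h).ne'
  have hPu : ∀ a b, (a, b) ∈ U → pdu (fun u v => Q u v ^ s) a b = Qu a b * s * Q a b ^ (s - 1) :=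
    fun a b h => ((hQu a b h).rpow_const (hQ0 a b h _)).deriv
  have hPv : ∀ a b, (a, b) ∈ U → pdv (fun u v => Q u v ^ s) a b = Qv a b * s * Q a b ^ (s - 1) :=
    fun a b h => ((hQv a b h).rpow_const (hQ0 a b h _)).deriv
  have hPuu : pdu (pdu fun u v => Q u v ^ s) x y =
      Quu x y * s * Q x y ^ (s - 1) + Qu x y * s * (Qu x y * (s - 1) * Q x y ^ (s - 1 - 1)) := by
    rw [pdu_congr_s7 hU hPu hxy]
    exact (((hQuu x y hxy).mul_const s).mul ((hQu x y hxy).rpow_const (hQ0 x y hxy (s - 1)))).deriv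
  have hPuv : pdv (pdu fun u v => Q u v ^ s) x y =
      Quv x y * s * Q x y ^ (s - 1) + Qu x y * s * (Qv x y * (s - 1) * Q x y ^ (s - 1 - 1)) := by
    rw [pdv_congr_s7 hU hPu hxy]
    exact (((hQuv x y hxy).mul_const s).mul ((hQv x y hxy).rpow_const (hQ0 x y hxy (s - 1)))).deriv
  have hPvv : pdv (pdv fun u v => Q u v ^ s) x y =
      Qvv x y * s * Q x y ^ (s - 1) + Qv x y * s * (Qv x y * (s - 1) * Q x y ^ (s - 1 - 1)) := by
    rw [pdv_congr_s7 hU hPv hxy]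
    exact (((hQvv x y hxy).mul_const s).mul ((hQv x y hxy).rpow_const (hQ0 x y hxy (s - 1)))).deriv
  have hQne := (hQ x y hxy).ne'
  rw [hessDet, hPuu, hPuv, hPvv]
  simp only [rpow_sub_one hQne]
  field_simp
  ring

end PartialDerivatives

section Kadiyala

variable {k₁ k₂ k₃ β₁ β₂ δ u v : ℝ}

noncomputable def kadBase (k₁ k₂ k₃ β₁ β₂ : ℝ) (u v : ℝ) : ℝ :=
  k₁ * u ^ (β₁ + β₂) + 2 * k₂ * u ^ β₁ * v ^ β₂ + k₃ * v ^ (β₁ + β₂)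

/-- The arguments stand for the monomials `k₁u^(β₁+β₂)`, `2k₂u^β₁v^β₂`, `k₃v^(β₁+β₂)` of
`kadBase`. Since `u ∂ᵤ` and `v ∂ᵥ` multiply each monomial by its exponent, the Hessian of `P`,
rescaled by `(uv)²`, is a polynomial in them. -/
def kadiyalaForm (β₁ β₂ m₁ m₂ m₃ : ℝ) : ℝ :=
  (β₁ + β₂) * β₂ * (β₂ - 1) * m₁ * m₂ + (β₁ + β₂) ^ 2 * (β₁ + β₂ - 1) * m₁ * m₃
    - β₁ * β₂ * m₂ ^ 2 + (β₁ + β₂) * β₁ * (β₁ - 1) * m₂ * m₃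

theorem kadBase_pos (hk₁ : 0 ≤ k₁) (hk₂ : 0 ≤ k₂) (hk₃ : 0 ≤ k₃) (h12 : ¬(k₁ = 0 ∧ k₂ = 0))
    (hu : 0 < u) (hv : 0 < v) : 0 < kadBase k₁ k₂ k₃ β₁ β₂ u v := by
  have hu₁ := rpow_pos_of_pos hu (β₁ + β₂)
  have hu₂ := rpow_pos_of_pos hu β₁
  have hv₁ := rpow_pos_of_pos hv β₂
  have hv₂ := rpow_pos_of_pos hv (β₁ + β₂)
  unfold kadBase
  rcases hk₁.eq_or_lt with rfl | hk₁
  · have hk₂ : 0 < k₂ := hk₂.lt_of_ne (Ne.symm fun h => h12 ⟨rfl, h⟩)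
    positivity
  · positivity

theorem hessDet_PKad (hk₁ : 0 ≤ k₁) (hk₂ : 0 ≤ k₂) (hk₃ : 0 ≤ k₃) (h12 : ¬(k₁ = 0 ∧ k₂ = 0))
    (hb : β₁ + β₂ ≠ 0) (hu : 0 < u) (hv : 0 < v) :
    (u * v) ^ 2 * hessDet (PKad k₁ k₂ k₃ β₁ β₂ δ) u v =
      (δ / (β₁ + β₂)) ^ 2 * PKad k₁ k₂ k₃ β₁ β₂ δ u v ^ 2 / kadBase k₁ k₂ k₃ β₁ β₂ u v ^ 2 *
        (δ - 1) * kadiyalaForm β₁ β₂ (k₁ * u ^ (β₁ + β₂)) (2 * k₂ * u ^ β₁ * v ^ β₂)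
          (k₃ * v ^ (β₁ + β₂)) := by
  set b := β₁ + β₂
  have hQ : ∀ a c, (a, c) ∈ Ioi (0 : ℝ) ×ˢ Ioi 0 → 0 < kadBase k₁ k₂ k₃ β₁ β₂ a c :=
    fun a c h => kadBase_pos hk₁ hk₂ hk₃ h12 h.1 h.2
  have key := hessDet_rpow (δ / b) (isOpen_Ioi.prod isOpen_Ioi) hQ
    (Qu := fun x y => k₁ * (b * x ^ (b - 1)) + 2 * k₂ * (β₁ * x ^ (β₁ - 1)) * y ^ β₂)
    (Qv := fun x y => 2 * k₂ * x ^ β₁ * (β₂ * y ^ (β₂ - 1)) + k₃ * (b * y ^ (b - 1)))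
    (Quu := fun x y => k₁ * (b * ((b - 1) * x ^ (b - 1 - 1)))
      + 2 * k₂ * (β₁ * ((β₁ - 1) * x ^ (β₁ - 1 - 1))) * y ^ β₂)
    (Quv := fun x y => 2 * k₂ * (β₁ * x ^ (β₁ - 1)) * (β₂ * y ^ (β₂ - 1)))
    (Qvv := fun x y => 2 * k₂ * x ^ β₁ * (β₂ * ((β₂ - 1) * y ^ (β₂ - 1 - 1)))
      + k₃ * (b * ((b - 1) * y ^ (b - 1 - 1))))
    (fun x y h => (((hasDerivAt_rpow_const (Or.inl h.1.ne')).const_mul k₁).add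
      (((hasDerivAt_rpow_const (Or.inl h.1.ne')).const_mul (2 * k₂)).mul_const _)).add_const _)
    (fun x y h => (((hasDerivAt_rpow_const (Or.inl h.2.ne')).const_mul _).const_add _).add
      ((hasDerivAt_rpow_const (Or.inl h.2.ne')).const_mul k₃))
    (fun x y h => (((hasDerivAt_rpow_const (Or.inl h.1.ne')).const_mul b).const_mul k₁).add
      ((((hasDerivAt_rpow_const (Or.inl h.1.ne')).const_mul β₁).const_mul (2 * k₂)).mul_const _))
    (fun x y h => ((hasDerivAt_rpow_const (Or.inl h.2.ne')).const_mul _).const_add _)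
    (fun x y h => ((((hasDerivAt_rpow_const (Or.inl h.2.ne')).const_mul β₂).const_mul _).add
      (((hasDerivAt_rpow_const (Or.inl h.2.ne')).const_mul b).const_mul k₃)))
    (x := u) (y := v) ⟨hu, hv⟩
  have hQ₀ := (hQ u v ⟨hu, hv⟩).ne'
  change (u * v) ^ 2 * hessDet (fun x y => kadBase k₁ k₂ k₃ β₁ β₂ x y ^ (δ / b)) u v =
    (δ / b) ^ 2 * (kadBase k₁ k₂ k₃ β₁ β₂ u v ^ (δ / b)) ^ 2 / kadBase k₁ k₂ k₃ β₁ β₂ u v ^ 2 *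
      (δ - 1) * kadiyalaForm β₁ β₂ (k₁ * u ^ b) (2 * k₂ * u ^ β₁ * v ^ β₂) (k₃ * v ^ b)
  rw [key]
  generalize kadBase k₁ k₂ k₃ β₁ β₂ u v ^ (δ / b) = R
  simp only [rpow_sub_one hu.ne', rpow_sub_one hv.ne']
  unfold kadBase at hQ₀ ⊢
  unfold kadiyalaForm
  field_simp
  ring

theorem kadiyalaForm_eq_zero_of_hessDet_eq_zero (hk₁ : 0 ≤ k₁) (hk₂ : 0 ≤ k₂) (hk₃ : 0 ≤ k₃)
    (h12 : ¬(k₁ = 0 ∧ k₂ = 0)) (hb : β₁ + β₂ ≠ 0) (hδ : δ ≠ 0) (hδ1 : δ ≠ 1) (hu : 0 < u)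
    (hv : 0 < v) (h : hessDet (PKad k₁ k₂ k₃ β₁ β₂ δ) u v = 0) :
    kadiyalaForm β₁ β₂ (k₁ * u ^ (β₁ + β₂)) (2 * k₂ * u ^ β₁ * v ^ β₂) (k₃ * v ^ (β₁ + β₂)) =
      0 := by
  have hhess := hessDet_PKad hk₁ hk₂ hk₃ h12 hb hu hv (δ := δ)
  rw [h, mul_zero] at hhess
  have hQpos := kadBase_pos hk₁ hk₂ hk₃ h12 (β₁ := β₁) (β₂ := β₂) hu hv
  have hQ := hQpos.ne'
  have hP : PKad k₁ k₂ k₃ β₁ β₂ δ u v ≠ 0 := (rpow_pos_of_pos hQpos _).ne'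
  have hs := div_ne_zero hδ hb
  have hδ1' := sub_ne_zero.mpr hδ1
  have hne : (δ / (β₁ + β₂)) ^ 2 * PKad k₁ k₂ k₃ β₁ β₂ δ u v ^ 2 /
      kadBase k₁ k₂ k₃ β₁ β₂ u v ^ 2 * (δ - 1) ≠ 0 := by
    positivity
  exact (mul_eq_zero.mp hhess.symm).resolve_left hne

theorem add_eq_one_of_kadiyalaForm_eq_zero (hk₁ : k₁ ≠ 0) (hk₃ : k₃ ≠ 0) (hb : β₁ + β₂ ≠ 0)
    (h : kadiyalaForm β₁ β₂ k₁ 0 k₃ = 0) : β₁ + β₂ = 1 := by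
  have hprod : ((β₁ + β₂) ^ 2 * k₁ * k₃) * (β₁ + β₂ - 1) = 0 := by
    unfold kadiyalaForm at h
    linear_combination h
  have hne : (β₁ + β₂) ^ 2 * k₁ * k₃ ≠ 0 := by positivity
  linarith [(mul_eq_zero.mp hprod).resolve_left hne]

theorem eq_of_kadiyalaForm_eq_zero (hk₂ : k₂ ≠ 0) (hβ₁ : β₁ ≠ 0) (hβ₂ : β₂ ≠ 0) (hb : β₁ + β₂ ≠ 0)
    (h : ∀ u : ℝ, 0 < u → kadiyalaForm β₁ β₂ (k₁ * u ^ (β₁ + β₂)) (2 * k₂ * u ^ β₁) k₃ = 0) :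
    β₁ = β₂ := by
  by_contra hne
  have hp : Function.Injective ![β₁ + (β₁ + β₂), β₁ + β₂, β₁ + β₁, β₁] := by
    intro i j hij
    fin_cases i <;> fin_cases j <;> simp at hij ⊢ <;> grind
  have hc := congrFun (eq_zero_of_sum_mul_rpow_eq_zero hp
    (c := ![2 * (β₁ + β₂) * β₂ * (β₂ - 1) * k₁ * k₂, (β₁ + β₂) ^ 2 * (β₁ + β₂ - 1) * k₁ * k₃,
      -4 * β₁ * β₂ * k₂ ^ 2, 2 * (β₁ + β₂) * β₁ * (β₁ - 1) * k₂ * k₃]) fun u hu => by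
    rw [← h u hu]
    simp only [Fin.sum_univ_four, Matrix.cons_val, rpow_add hu, kadiyalaForm]
    ring) 2
  have hc₂ : -4 * β₁ * β₂ * k₂ ^ 2 ≠ 0 := by positivity
  exact hc₂ (by simpa using hc)

theorem eq_one_of_kadiyalaForm_eq_zero {β : ℝ} (hk₂ : k₂ ≠ 0) (hβ : β ≠ 0)
    (h : ∀ u : ℝ, 0 < u → kadiyalaForm β β (k₁ * u ^ (β + β)) (2 * k₂ * u ^ β) k₃ = 0) :
    β = 1 ∧ k₁ * k₃ = k₂ ^ 2 := by
  have hp : Function.Injective ![β + (β + β), β + β, β] := by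
    intro i j hij
    fin_cases i <;> fin_cases j <;> simp at hij ⊢ <;> grind
  have hc := eq_zero_of_sum_mul_rpow_eq_zero hp
    (c := ![4 * β ^ 2 * (β - 1) * k₁ * k₂, 4 * β ^ 2 * ((2 * β - 1) * k₁ * k₃ - k₂ ^ 2),
      4 * β ^ 2 * (β - 1) * k₂ * k₃]) fun u hu => by
    rw [← h u hu]
    simp only [Fin.sum_univ_three, Matrix.cons_val, rpow_add hu, kadiyalaForm]
    ring
  have h₀ : 4 * β ^ 2 * (β - 1) * k₁ * k₂ = 0 := by simpa using congrFun hc 0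
  have h₁ : 4 * β ^ 2 * ((2 * β - 1) * k₁ * k₃ - k₂ ^ 2) = 0 := by simpa using congrFun hc 1
  have h₂ : 4 * β ^ 2 * (β - 1) * k₂ * k₃ = 0 := by simpa using congrFun hc 2
  have hβ1 : β = 1 := by
    by_contra hβ1
    have hk₁ : k₁ = 0 := by simpa [hβ, sub_eq_zero, hβ1, hk₂] using h₀
    have hk₃ : k₃ = 0 := by simpa [hβ, sub_eq_zero, hβ1, hk₂] using h₂
    simp [hk₁, hβ, hk₂] at h₁
  subst hβ1
  exact ⟨rfl, by linear_combination h₁ / 4⟩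

theorem PKad_of_add_eq_one (h : β₁ + β₂ = 1) :
    PKad k₁ 0 k₃ β₁ β₂ δ u v = (k₁ * u + k₃ * v) ^ δ := by
  simp [PKad, h]

theorem PKad_one_one (hk₁ : 0 ≤ k₁) (hk₂ : 0 ≤ k₂) (hk₃ : 0 ≤ k₃) (h : k₁ * k₃ = k₂ ^ 2)
    (hu : 0 ≤ u) (hv : 0 ≤ v) :
    PKad k₁ k₂ k₃ 1 1 δ u v = (√k₁ * u + √k₃ * v) ^ δ := by
  have hmix : √k₁ * √k₃ = k₂ := by rw [← sqrt_mul hk₁, h, sqrt_sq hk₂]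
  have hsquare : k₁ * u ^ (1 + 1 : ℝ) + 2 * k₂ * u ^ (1 : ℝ) * v ^ (1 : ℝ) + k₃ * v ^ (1 + 1 : ℝ) =
      (√k₁ * u + √k₃ * v) ^ (2 : ℝ) := by
    norm_num [← hmix]
    linear_combination (-u ^ 2) * sq_sqrt hk₁ - v ^ 2 * sq_sqrt hk₃
  rw [PKad, hsquare, one_add_one_eq_two, ← rpow_mul (by positivity), mul_div_cancel₀ δ two_ne_zero]

end Kadiyala

theorem kadiyala_developable_of_ne_one_general
    (k₁ k₂ k₃ β₁ β₂ δ : ℝ)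
    (hk₁ : 0 ≤ k₁) (hk₂ : 0 ≤ k₂) (hk₃ : 0 ≤ k₃)
    (h12 : ¬(k₁ = 0 ∧ k₂ = 0)) (h23 : ¬(k₂ = 0 ∧ k₃ = 0))
    (hβ₁ : 0 < β₁ * (β₁ + β₂)) (hβ₂ : 0 < β₂ * (β₁ + β₂)) (hδ : 0 < δ) (hδ1 : δ ≠ 1)
    (hdev : ∀ u v : ℝ, 0 < u → 0 < v → gaussK (PKad k₁ k₂ k₃ β₁ β₂ δ) u v = 0) :
    ((k₂ = 0 ∧ β₁ + β₂ = 1) ∨ (β₁ = 1 ∧ β₂ = 1 ∧ k₁ * k₃ = k₂ ^ 2)) ∧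
      ∃ a b : ℝ, 0 ≤ a ∧ 0 ≤ b ∧
        ∀ u v : ℝ, 0 < u → 0 < v → PKad k₁ k₂ k₃ β₁ β₂ δ u v = (a * u + b * v) ^ δ := by
  have hb : β₁ + β₂ ≠ 0 := right_ne_zero_of_mul hβ₁.ne'
  have hβ₁0 : β₁ ≠ 0 := left_ne_zero_of_mul hβ₁.ne'
  have hβ₂0 : β₂ ≠ 0 := left_ne_zero_of_mul hβ₂.ne'
  have hform : ∀ u : ℝ, 0 < u →
      kadiyalaForm β₁ β₂ (k₁ * u ^ (β₁ + β₂)) (2 * k₂ * u ^ β₁) k₃ = 0 := fun u hu => by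
    simpa using kadiyalaForm_eq_zero_of_hessDet_eq_zero hk₁ hk₂ hk₃ h12 hb hδ.ne' hδ1 hu one_pos
      (hessDet_eq_zero_of_gaussK_eq_zero (hdev u 1 hu one_pos))
  have hparams : (k₂ = 0 ∧ β₁ + β₂ = 1) ∨ (β₁ = 1 ∧ β₂ = 1 ∧ k₁ * k₃ = k₂ ^ 2) := by
    by_cases hk₂0 : k₂ = 0
    · subst hk₂0
      refine Or.inl ⟨rfl, add_eq_one_of_kadiyalaForm_eq_zero (fun h => h12 ⟨h, rfl⟩)
        (fun h => h23 ⟨rfl, h⟩) hb ?_⟩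
      simpa using hform 1 one_pos
    · obtain rfl := eq_of_kadiyalaForm_eq_zero hk₂0 hβ₁0 hβ₂0 hb hform
      obtain ⟨rfl, h⟩ := eq_one_of_kadiyalaForm_eq_zero hk₂0 hβ₁0 hform
      exact Or.inr ⟨rfl, rfl, h⟩
  refine ⟨hparams, ?_⟩
  rcases hparams with ⟨rfl, h⟩ | ⟨rfl, rfl, h⟩
  · exact ⟨k₁, k₃, hk₁, hk₃, fun u v _ _ => PKad_of_add_eq_one h⟩
  · exact ⟨√k₁, √k₃, sqrt_nonneg _, sqrt_nonneg _,
      fun u v hu hv => PKad_one_one hk₁ hk₂ hk₃ h hu.le hv.le⟩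

/-- If the Kadiyala surface is developable and `δ ≠ 1`, then either `k₂ = 0` and
`β₁ + β₂ = 1`, or `β₁ = β₂ = 1` and `k₁k₃ = k₂²`; in particular, `P` is a perfect
substitutes production function, i.e. of the form `(a·u + b·v)^δ` with `a, b ≥ 0`. -/
theorem kadiyala_developable_of_ne_one
    (k₁ k₂ k₃ β₁ β₂ δ : ℝ)
    (hsum : k₁ + 2 * k₂ + k₃ = 1) (hk₁ : 0 ≤ k₁) (hk₂ : 0 ≤ k₂) (hk₃ : 0 ≤ k₃)
    (h12 : ¬(k₁ = 0 ∧ k₂ = 0)) (h23 : ¬(k₂ = 0 ∧ k₃ = 0))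
    (hβ₁ : 0 < β₁ * (β₁ + β₂)) (hβ₂ : 0 < β₂ * (β₁ + β₂)) (hδ : 0 < δ) (hδ1 : δ ≠ 1)
    (hdev : ∀ u v : ℝ, 0 < u → 0 < v → gaussK (PKad k₁ k₂ k₃ β₁ β₂ δ) u v = 0) :
    ((k₂ = 0 ∧ β₁ + β₂ = 1) ∨ (β₁ = 1 ∧ β₂ = 1 ∧ k₁ * k₃ = k₂ ^ 2)) ∧
      ∃ a b : ℝ, 0 ≤ a ∧ 0 ≤ b ∧
        ∀ u v : ℝ, 0 < u → 0 < v → PKad k₁ k₂ k₃ β₁ β₂ δ u v = (a * u + b * v) ^ δ :=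
  kadiyala_developable_of_ne_one_general k₁ k₂ k₃ β₁ β₂ δ hk₁ hk₂ hk₃ h12 h23 hβ₁ hβ₂ hδ hδ1 hdev
end

section
/- Let P(u,v) = (k₁·u^{β₁+β₂} + 2k₂·u^{β₁}·v^{β₂} + k₃·v^{β₁+β₂})^{δ/(β₁+β₂)} be a 2-input Kadiyala production function with parameters satisfying (★★). Then the Hessian determinant P_uu·P_vv − P_uv² vanishes identically on (0,∞)² if and only if at least one of the following holds: (i) δ = 1; (ii) k₂ = 0 and β₁+β₂ = 1; (iii) β₁ = β₂ = 1 and k₂² − k₁k₃ = 0. -/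
open Real

/-!
Write `a = β₁ + β₂`, `s = δ / a` and `P = Q ^ s`, where `Q = k₁ u^a + 2 k₂ u^β₁ v^β₂ + k₃ v^a`
(`Kadiyala.base`) is positive on the open quadrant. For a composition `F ∘ Q` the Hessian
determinant is `F'² · det Hess Q + F' F'' · (Q_u² Q_vv − 2 Q_u Q_v Q_uv + Q_v² Q_uu)`. Because `Q`
is homogeneous of degree `a`, after multiplication by `u² v²` the two brackets become `(a − 1) S`
and `a Q S` for one and the same expression `S` (`Kadiyala.hessNumerator`), and they combine to
`u² v² · det Hess P = (s Q^(s−1))² (δ − 1) S`. So the determinant vanishes identically iff `δ = 1`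
or `S` does. On the line `v = 1`, `S` is a combination of the powers `t^a, t^(2β₁), t^(a+β₁), t^β₁`
(only three distinct ones if `β₁ = β₂`), and distinct real powers are linearly independent on
`(0, ∞)`: at `t = 2^k` they form a Vandermonde system. The vanishing of the coefficients leaves
exactly the cases (ii) and (iii).
-/

theorem eq_zero_of_forall_sum_mul_rpow_eq_zero {n : ℕ} {c p : Fin n → ℝ}
    (hp : Function.Injective p) (h : ∀ t > 0, ∑ i, c i * t ^ p i = 0) : c = 0 := by
  refine Matrix.eq_zero_of_forall_pow_sum_mul_pow_eq_zero (f := fun i => (2 : ℝ) ^ p i)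
    ((strictMono_rpow_of_base_gt_one one_lt_two).injective.comp hp) fun k => ?_
  simp only [rpow_pow_comm zero_le_two]
  exact h _ (by positivity)

section Composition

variable {F F' F'' : ℝ → ℝ} {g gu gv guu guv gvv : ℝ → ℝ → ℝ}

theorem hessDet_comp
    (hF : ∀ x > 0, ∀ y > 0, HasDerivAt F (F' (g x y)) (g x y))
    (hF' : ∀ x > 0, ∀ y > 0, HasDerivAt F' (F'' (g x y)) (g x y))
    (hgu : ∀ x > 0, ∀ y > 0, HasDerivAt (g · y) (gu x y) x)
    (hgv : ∀ x > 0, ∀ y > 0, HasDerivAt (g x ·) (gv x y) y)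
    (hguu : ∀ x > 0, ∀ y > 0, HasDerivAt (gu · y) (guu x y) x)
    (hguv : ∀ x > 0, ∀ y > 0, HasDerivAt (gu x ·) (guv x y) y)
    (hgvv : ∀ x > 0, ∀ y > 0, HasDerivAt (gv x ·) (gvv x y) y)
    {u v : ℝ} (hu : 0 < u) (hv : 0 < v) :
    hessDet (fun x y => F (g x y)) u v =
      F' (g u v) ^ 2 * (guu u v * gvv u v - guv u v ^ 2) +
        F' (g u v) * F'' (g u v) *
          (gu u v ^ 2 * gvv u v - 2 * gu u v * gv u v * guv u v + gv u v ^ 2 * guu u v) := by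
  have hfu : ∀ x > 0, ∀ y > 0, pdu (fun x y => F (g x y)) x y = F' (g x y) * gu x y :=
    fun x hx y hy => ((hF x hx y hy).comp x (hgu x hx y hy)).deriv
  have hfv : ∀ x > 0, ∀ y > 0, pdv (fun x y => F (g x y)) x y = F' (g x y) * gv x y :=
    fun x hx y hy => ((hF x hx y hy).comp y (hgv x hx y hy)).deriv
  have huu : pdu (pdu fun x y => F (g x y)) u v =
      F'' (g u v) * gu u v * gu u v + F' (g u v) * guu u v :=
    ((((hF' u hu v hv).comp u (hgu u hu v hv)).mul (hguu u hu v hv)).congr_of_eventuallyEq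
      (Filter.eventually_of_mem (Ioi_mem_nhds hu) fun x hx => hfu x hx v hv)).deriv
  have huv : pdv (pdu fun x y => F (g x y)) u v =
      F'' (g u v) * gv u v * gu u v + F' (g u v) * guv u v :=
    ((((hF' u hu v hv).comp v (hgv u hu v hv)).mul (hguv u hu v hv)).congr_of_eventuallyEq
      (Filter.eventually_of_mem (Ioi_mem_nhds hv) fun y hy => hfu u hu y hy)).deriv
  have hvv : pdv (pdv fun x y => F (g x y)) u v =
      F'' (g u v) * gv u v * gv u v + F' (g u v) * gvv u v :=
    ((((hF' u hu v hv).comp v (hgv u hu v hv)).mul (hgvv u hu v hv)).congr_of_eventuallyEq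
      (Filter.eventually_of_mem (Ioi_mem_nhds hv) fun y hy => hfv u hu y hy)).deriv
  rw [hessDet, huu, huv, hvv]
  ring

end Composition

noncomputable section

namespace Kadiyala

variable (k₁ k₂ k₃ β₁ β₂ : ℝ)

def base (u v : ℝ) : ℝ :=
  k₁ * u ^ (β₁ + β₂) + 2 * k₂ * u ^ β₁ * v ^ β₂ + k₃ * v ^ (β₁ + β₂)

def baseDu (u v : ℝ) : ℝ :=
  k₁ * ((β₁ + β₂) * u ^ (β₁ + β₂ - 1)) + 2 * k₂ * (β₁ * u ^ (β₁ - 1)) * v ^ β₂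

def baseDv (u v : ℝ) : ℝ :=
  2 * k₂ * u ^ β₁ * (β₂ * v ^ (β₂ - 1)) + k₃ * ((β₁ + β₂) * v ^ (β₁ + β₂ - 1))

def baseDuu (u v : ℝ) : ℝ :=
  k₁ * ((β₁ + β₂) * ((β₁ + β₂ - 1) * u ^ (β₁ + β₂ - 1 - 1))) +
    2 * k₂ * (β₁ * ((β₁ - 1) * u ^ (β₁ - 1 - 1))) * v ^ β₂

def baseDuv (u v : ℝ) : ℝ :=
  2 * k₂ * (β₁ * u ^ (β₁ - 1)) * (β₂ * v ^ (β₂ - 1))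

def baseDvv (u v : ℝ) : ℝ :=
  2 * k₂ * u ^ β₁ * (β₂ * ((β₂ - 1) * v ^ (β₂ - 1 - 1))) +
    k₃ * ((β₁ + β₂) * ((β₁ + β₂ - 1) * v ^ (β₁ + β₂ - 1 - 1)))

def hessNumerator (u v : ℝ) : ℝ :=
  (β₁ + β₂ - 1) * k₁ * k₃ * (β₁ + β₂) ^ 2 * (u ^ (β₁ + β₂) * v ^ (β₁ + β₂))
    - 4 * k₂ ^ 2 * β₁ * β₂ * (u ^ β₁ * v ^ β₂) ^ 2
    + 2 * k₁ * k₂ * (β₁ + β₂) * β₂ * (β₂ - 1) * (u ^ (β₁ + β₂) * (u ^ β₁ * v ^ β₂))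
    + 2 * k₂ * k₃ * (β₁ + β₂) * β₁ * (β₁ - 1) * (u ^ β₁ * v ^ β₂ * v ^ (β₁ + β₂))

theorem hessian_base_mul_sq {u v : ℝ} (hu : 0 < u) (hv : 0 < v) :
    (baseDuu k₁ k₂ β₁ β₂ u v * baseDvv k₂ k₃ β₁ β₂ u v - baseDuv k₂ β₁ β₂ u v ^ 2) *
        (u ^ 2 * v ^ 2) = (β₁ + β₂ - 1) * hessNumerator k₁ k₂ k₃ β₁ β₂ u v := by
  simp only [baseDuu, baseDvv, baseDuv, hessNumerator, rpow_sub_one hu.ne', rpow_sub_one hv.ne']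
  field_simp
  ring

theorem borderedHessian_base_mul_sq {u v : ℝ} (hu : 0 < u) (hv : 0 < v) :
    (baseDu k₁ k₂ β₁ β₂ u v ^ 2 * baseDvv k₂ k₃ β₁ β₂ u v
        - 2 * baseDu k₁ k₂ β₁ β₂ u v * baseDv k₂ k₃ β₁ β₂ u v * baseDuv k₂ β₁ β₂ u v
        + baseDv k₂ k₃ β₁ β₂ u v ^ 2 * baseDuu k₁ k₂ β₁ β₂ u v) * (u ^ 2 * v ^ 2) =
      (β₁ + β₂) * base k₁ k₂ k₃ β₁ β₂ u v * hessNumerator k₁ k₂ k₃ β₁ β₂ u v := by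
  simp only [base, baseDu, baseDv, baseDuu, baseDvv, baseDuv, hessNumerator, rpow_sub_one hu.ne',
    rpow_sub_one hv.ne']
  field_simp
  ring

variable {k₁ k₂ k₃ β₁ β₂}

theorem hasDerivAt_base_u {u : ℝ} (hu : 0 < u) (v : ℝ) :
    HasDerivAt (base k₁ k₂ k₃ β₁ β₂ · v) (baseDu k₁ k₂ β₁ β₂ u v) u := by
  have h₁ := (hasDerivAt_rpow_const (p := β₁ + β₂) (Or.inl hu.ne')).const_mul k₁
  have h₂ := ((hasDerivAt_rpow_const (p := β₁) (Or.inl hu.ne')).const_mul (2 * k₂)).mul_const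
    (v ^ β₂)
  exact (h₁.add h₂).add_const (k₃ * v ^ (β₁ + β₂))

theorem hasDerivAt_base_v (u : ℝ) {v : ℝ} (hv : 0 < v) :
    HasDerivAt (base k₁ k₂ k₃ β₁ β₂ u ·) (baseDv k₂ k₃ β₁ β₂ u v) v := by
  have h₂ := (hasDerivAt_rpow_const (p := β₂) (Or.inl hv.ne')).const_mul (2 * k₂ * u ^ β₁)
  have h₃ := (hasDerivAt_rpow_const (p := β₁ + β₂) (Or.inl hv.ne')).const_mul k₃
  exact (((hasDerivAt_const v (k₁ * u ^ (β₁ + β₂))).add h₂).add h₃).congr_deriv (by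
    rw [zero_add]; rfl)

theorem hasDerivAt_baseDu_u {u : ℝ} (hu : 0 < u) (v : ℝ) :
    HasDerivAt (baseDu k₁ k₂ β₁ β₂ · v) (baseDuu k₁ k₂ β₁ β₂ u v) u := by
  have h₁ := ((hasDerivAt_rpow_const (p := β₁ + β₂ - 1) (Or.inl hu.ne')).const_mul
    (β₁ + β₂)).const_mul k₁
  have h₂ := (((hasDerivAt_rpow_const (p := β₁ - 1) (Or.inl hu.ne')).const_mul β₁).const_mul
    (2 * k₂)).mul_const (v ^ β₂)
  exact h₁.add h₂

theorem hasDerivAt_baseDu_v (u : ℝ) {v : ℝ} (hv : 0 < v) :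
    HasDerivAt (baseDu k₁ k₂ β₁ β₂ u ·) (baseDuv k₂ β₁ β₂ u v) v :=
  ((hasDerivAt_rpow_const (p := β₂) (Or.inl hv.ne')).const_mul
    (2 * k₂ * (β₁ * u ^ (β₁ - 1)))).const_add (k₁ * ((β₁ + β₂) * u ^ (β₁ + β₂ - 1)))

theorem hasDerivAt_baseDv_v (u : ℝ) {v : ℝ} (hv : 0 < v) :
    HasDerivAt (baseDv k₂ k₃ β₁ β₂ u ·) (baseDvv k₂ k₃ β₁ β₂ u v) v := by
  have h₂ := ((hasDerivAt_rpow_const (p := β₂ - 1) (Or.inl hv.ne')).const_mul β₂).const_mul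
    (2 * k₂ * u ^ β₁)
  have h₃ := ((hasDerivAt_rpow_const (p := β₁ + β₂ - 1) (Or.inl hv.ne')).const_mul
    (β₁ + β₂)).const_mul k₃
  exact h₂.add h₃

theorem base_pos (hk₁ : 0 ≤ k₁) (hk₂ : 0 ≤ k₂) (hk₃ : 0 ≤ k₃) (h12 : ¬(k₁ = 0 ∧ k₂ = 0))
    {u v : ℝ} (hu : 0 < u) (hv : 0 < v) : 0 < base k₁ k₂ k₃ β₁ β₂ u v := by
  have hk : 0 < k₁ ∨ 0 < k₂ := by
    by_contra! h
    exact h12 ⟨le_antisymm h.1 hk₁, le_antisymm h.2 hk₂⟩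
  unfold base
  rcases hk with hk | hk <;> positivity

theorem hessDet_PKad_mul_sq (δ : ℝ) (ha : β₁ + β₂ ≠ 0)
    (hpos : ∀ x > 0, ∀ y > 0, 0 < base k₁ k₂ k₃ β₁ β₂ x y) {u v : ℝ} (hu : 0 < u) (hv : 0 < v) :
    hessDet (PKad k₁ k₂ k₃ β₁ β₂ δ) u v * (u ^ 2 * v ^ 2) =
      (δ / (β₁ + β₂) * base k₁ k₂ k₃ β₁ β₂ u v ^ (δ / (β₁ + β₂) - 1)) ^ 2 *
        ((δ - 1) * hessNumerator k₁ k₂ k₃ β₁ β₂ u v) := by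
  set s := δ / (β₁ + β₂)
  set Q := base k₁ k₂ k₃ β₁ β₂
  have hF : ∀ x > 0, ∀ y > 0, HasDerivAt (· ^ s) (s * Q x y ^ (s - 1)) (Q x y) :=
    fun x hx y hy => hasDerivAt_rpow_const (Or.inl (hpos x hx y hy).ne')
  have hF' : ∀ x > 0, ∀ y > 0,
      HasDerivAt (fun t => s * t ^ (s - 1)) (s * ((s - 1) * Q x y ^ (s - 1 - 1))) (Q x y) :=
    fun x hx y hy => (hasDerivAt_rpow_const (Or.inl (hpos x hx y hy).ne')).const_mul s
  have hcomp : hessDet (PKad k₁ k₂ k₃ β₁ β₂ δ) u v = _ :=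
    hessDet_comp (F := (· ^ s)) (F' := fun t => s * t ^ (s - 1))
      (F'' := fun t => s * ((s - 1) * t ^ (s - 1 - 1))) hF hF'
      (fun x hx y _ => hasDerivAt_base_u hx y) (fun x _ y hy => hasDerivAt_base_v x hy)
      (fun x hx y _ => hasDerivAt_baseDu_u hx y) (fun x _ y hy => hasDerivAt_baseDu_v x hy)
      (fun x _ y hy => hasDerivAt_baseDv_v x hy) hu hv
  rw [hcomp]
  have hsa : s * (β₁ + β₂) = δ := div_mul_cancel₀ δ ha
  have hpow : Q u v ^ (s - 1 - 1) * Q u v = Q u v ^ (s - 1) := by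
    rw [rpow_sub_one (hpos u hu v hv).ne' (s - 1), div_mul_cancel₀ _ (hpos u hu v hv).ne']
  -- the two brackets contribute `(a - 1) S` and `a (s - 1) S`, and `(a - 1) + a (s - 1) = δ - 1`
  linear_combination (s * Q u v ^ (s - 1)) ^ 2 * hessian_base_mul_sq k₁ k₂ k₃ β₁ β₂ hu hv
    + s ^ 2 * (s - 1) * Q u v ^ (s - 1) * Q u v ^ (s - 1 - 1) *
      borderedHessian_base_mul_sq k₁ k₂ k₃ β₁ β₂ hu hv
    + s ^ 2 * (s - 1) * (β₁ + β₂) * Q u v ^ (s - 1) * hessNumerator k₁ k₂ k₃ β₁ β₂ u v * hpow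
    + s ^ 2 * (Q u v ^ (s - 1)) ^ 2 * hessNumerator k₁ k₂ k₃ β₁ β₂ u v * hsa

theorem hessDet_PKad_eq_zero_iff {δ : ℝ} (hδ : δ ≠ 0) (ha : β₁ + β₂ ≠ 0)
    (hpos : ∀ x > 0, ∀ y > 0, 0 < base k₁ k₂ k₃ β₁ β₂ x y) {u v : ℝ} (hu : 0 < u) (hv : 0 < v) :
    hessDet (PKad k₁ k₂ k₃ β₁ β₂ δ) u v = 0 ↔
      δ = 1 ∨ hessNumerator k₁ k₂ k₃ β₁ β₂ u v = 0 := by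
  have hc : (δ / (β₁ + β₂) * base k₁ k₂ k₃ β₁ β₂ u v ^ (δ / (β₁ + β₂) - 1)) ^ 2 ≠ 0 :=
    pow_ne_zero 2 (mul_ne_zero (div_ne_zero hδ ha) (rpow_pos_of_pos (hpos u hu v hv) _).ne')
  rw [← mul_left_inj' (by positivity : u ^ 2 * v ^ 2 ≠ 0), zero_mul,
    hessDet_PKad_mul_sq δ ha hpos hu hv, mul_eq_zero, or_iff_right hc, mul_eq_zero, sub_eq_zero]

theorem hessNumerator_one_one (u v : ℝ) :
    hessNumerator k₁ k₂ k₃ 1 1 u v = -4 * (k₂ ^ 2 - k₁ * k₃) * (u * v) ^ 2 := by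
  simp only [hessNumerator, one_add_one_eq_two, rpow_ofNat, rpow_one]
  ring

theorem eq_zero_and_add_eq_one_of_hessNumerator_eq_zero (hβ₁ : β₁ ≠ 0) (hβ₂ : β₂ ≠ 0)
    (ha : β₁ + β₂ ≠ 0) (hne : β₁ ≠ β₂) (h12 : ¬(k₁ = 0 ∧ k₂ = 0)) (h23 : ¬(k₂ = 0 ∧ k₃ = 0))
    (h : ∀ t > 0, hessNumerator k₁ k₂ k₃ β₁ β₂ t 1 = 0) : k₂ = 0 ∧ β₁ + β₂ = 1 := by
  have hc := eq_zero_of_forall_sum_mul_rpow_eq_zero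
    (c := ![(β₁ + β₂ - 1) * k₁ * k₃ * (β₁ + β₂) ^ 2, -(4 * k₂ ^ 2 * β₁ * β₂),
      2 * k₁ * k₂ * (β₁ + β₂) * β₂ * (β₂ - 1), 2 * k₂ * k₃ * (β₁ + β₂) * β₁ * (β₁ - 1)])
    (p := ![β₁ + β₂, β₁ + β₁, β₁ + β₂ + β₁, β₁])
    (by simp [Function.Injective, Fin.forall_fin_succ, hβ₁, hβ₂, ha, hne, hne.symm])
    fun t ht => by
      rw [← h t ht, Fin.sum_univ_four]
      simp only [Matrix.cons_val, hessNumerator, one_rpow, mul_one, rpow_add ht]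
      ring
  have hk₂ : k₂ = 0 := by simpa [hβ₁, hβ₂] using congrFun hc 1
  have hk₁ : k₁ ≠ 0 := fun hk => h12 ⟨hk, hk₂⟩
  have hk₃ : k₃ ≠ 0 := fun hk => h23 ⟨hk₂, hk⟩
  exact ⟨hk₂, by simpa [hk₁, hk₃, ha, sub_eq_zero] using congrFun hc 0⟩

theorem eq_zero_and_add_eq_one_or_eq_one_of_hessNumerator_eq_zero {β : ℝ} (hβ : β ≠ 0)
    (h12 : ¬(k₁ = 0 ∧ k₂ = 0)) (h23 : ¬(k₂ = 0 ∧ k₃ = 0))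
    (h : ∀ t > 0, hessNumerator k₁ k₂ k₃ β β t 1 = 0) :
    (k₂ = 0 ∧ β + β = 1) ∨ (β = 1 ∧ k₂ ^ 2 - k₁ * k₃ = 0) := by
  have hc := eq_zero_of_forall_sum_mul_rpow_eq_zero
    (c := ![4 * β ^ 2 * ((β + β - 1) * k₁ * k₃ - k₂ ^ 2), 2 * k₁ * k₂ * (β + β) * β * (β - 1),
      2 * k₂ * k₃ * (β + β) * β * (β - 1)])
    (p := ![β + β, β + β + β, β])
    (by simp [Function.Injective, Fin.forall_fin_succ, hβ])
    fun t ht => by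
      rw [← h t ht, Fin.sum_univ_three]
      simp only [Matrix.cons_val, hessNumerator, one_rpow, mul_one, rpow_add ht]
      ring
  have h₀ : (β + β - 1) * k₁ * k₃ - k₂ ^ 2 = 0 := by simpa [hβ] using congrFun hc 0
  rcases eq_or_ne β 1 with rfl | hβ1
  · exact Or.inr ⟨rfl, by linear_combination -h₀⟩
  have h₁ : k₁ = 0 ∨ k₂ = 0 := by simpa [hβ, sub_eq_zero, hβ1] using congrFun hc 1
  have h₂ : k₂ = 0 ∨ k₃ = 0 := by simpa [hβ, sub_eq_zero, hβ1] using congrFun hc 2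
  rcases eq_or_ne k₂ 0 with hk₂ | hk₂
  · have hk₁ : k₁ ≠ 0 := fun hk => h12 ⟨hk, hk₂⟩
    have hk₃ : k₃ ≠ 0 := fun hk => h23 ⟨hk₂, hk⟩
    exact Or.inl ⟨hk₂, by simpa [hk₂, hk₁, hk₃, sub_eq_zero] using h₀⟩
  · simp [h₁.resolve_right hk₂, h₂.resolve_left hk₂, hk₂] at h₀

end Kadiyala

end

open Kadiyala in
theorem kadiyala_hessDet_vanishes_iff_general
    (k₁ k₂ k₃ β₁ β₂ δ : ℝ)
    (hk₁ : 0 ≤ k₁) (hk₂ : 0 ≤ k₂) (hk₃ : 0 ≤ k₃)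
    (h12 : ¬(k₁ = 0 ∧ k₂ = 0)) (h23 : ¬(k₂ = 0 ∧ k₃ = 0))
    (hβ₁ : 0 < β₁ * (β₁ + β₂)) (hβ₂ : 0 < β₂ * (β₁ + β₂)) (hδ : 0 < δ) :
    (∀ u v : ℝ, 0 < u → 0 < v → hessDet (PKad k₁ k₂ k₃ β₁ β₂ δ) u v = 0) ↔
      (δ = 1 ∨ (k₂ = 0 ∧ β₁ + β₂ = 1) ∨ (β₁ = 1 ∧ β₂ = 1 ∧ k₂ ^ 2 - k₁ * k₃ = 0)) := by
  have ha : β₁ + β₂ ≠ 0 := fun h => by simp [h] at hβ₁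
  have hb₁ : β₁ ≠ 0 := fun h => by simp [h] at hβ₁
  have hb₂ : β₂ ≠ 0 := fun h => by simp [h] at hβ₂
  have hzero : ∀ u > 0, ∀ v > 0, hessDet (PKad k₁ k₂ k₃ β₁ β₂ δ) u v = 0 ↔
      δ = 1 ∨ hessNumerator k₁ k₂ k₃ β₁ β₂ u v = 0 := fun u hu v hv =>
    hessDet_PKad_eq_zero_iff hδ.ne' ha (fun x hx y hy => base_pos hk₁ hk₂ hk₃ h12 hx hy) hu hv
  constructor
  · intro h
    rcases eq_or_ne δ 1 with hδ1 | hδ1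
    · exact Or.inl hδ1
    have hS : ∀ t > 0, hessNumerator k₁ k₂ k₃ β₁ β₂ t 1 = 0 := fun t ht =>
      ((hzero t ht 1 one_pos).mp (h t 1 ht one_pos)).resolve_left hδ1
    rcases eq_or_ne β₁ β₂ with rfl | hne
    · exact Or.inr <| (eq_zero_and_add_eq_one_or_eq_one_of_hessNumerator_eq_zero hb₁ h12 h23
        hS).imp id fun h => ⟨h.1, h.1, h.2⟩
    · exact Or.inr <| Or.inl <|
        eq_zero_and_add_eq_one_of_hessNumerator_eq_zero hb₁ hb₂ ha hne h12 h23 hS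
  · intro hcases u v hu hv
    rw [hzero u hu v hv]
    rcases hcases with hδ1 | ⟨hk, ha1⟩ | ⟨rfl, rfl, hk⟩
    · exact Or.inl hδ1
    · exact Or.inr (by simp [hessNumerator, hk, ha1])
    · exact Or.inr (by simp [hessNumerator_one_one, hk])

/-- The Hessian determinant `P_uu·P_vv − P_uv²` of the Kadiyala production function vanishes
identically on `(0,∞)²` if and only if `δ = 1`, or `k₂ = 0` and `β₁ + β₂ = 1`, or
`β₁ = β₂ = 1` and `k₂² − k₁k₃ = 0`. -/
theorem kadiyala_hessDet_vanishes_iff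
    (k₁ k₂ k₃ β₁ β₂ δ : ℝ)
    (hsum : k₁ + 2 * k₂ + k₃ = 1) (hk₁ : 0 ≤ k₁) (hk₂ : 0 ≤ k₂) (hk₃ : 0 ≤ k₃)
    (h12 : ¬(k₁ = 0 ∧ k₂ = 0)) (h23 : ¬(k₂ = 0 ∧ k₃ = 0))
    (hβ₁ : 0 < β₁ * (β₁ + β₂)) (hβ₂ : 0 < β₂ * (β₁ + β₂)) (hδ : 0 < δ) :
    (∀ u v : ℝ, 0 < u → 0 < v → hessDet (PKad k₁ k₂ k₃ β₁ β₂ δ) u v = 0) ↔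
      (δ = 1 ∨ (k₂ = 0 ∧ β₁ + β₂ = 1) ∨ (β₁ = 1 ∧ β₂ = 1 ∧ k₂ ^ 2 - k₁ * k₃ = 0)) :=
  kadiyala_hessDet_vanishes_iff_general k₁ k₂ k₃ β₁ β₂ δ hk₁ hk₂ hk₃ h12 h23 hβ₁ hβ₂ hδ
end

section
/- Let P(u,v) = (k₁·u^{β₁+β₂} + 2k₂·u^{β₁}·v^{β₂} + k₃·v^{β₁+β₂})^{δ/(β₁+β₂)} be a 2-input Kadiyala production function with parameters satisfying (★★), and assume additionally that k₁ = 0 (so k₂ > 0) and δ ≠ 1. Then the Gaussian curvature of the graph surface {(u,v,P(u,v)) : u>0, v>0} does not vanish identically on (0,∞)²; in particular, the Kadiyala surface is not developable in this case. -/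
open Real

section Aux

variable (A K a b c : ℝ)

private lemma gpos (hA : 0 < A) (hK : 0 ≤ K) {u v : ℝ} (hu : 0 < u) (hv : 0 < v) :
    0 < A * u ^ a * v ^ b + K * v ^ (a + b) := by
  have h1 : 0 < A * u ^ a * v ^ b := by positivity
  have h2 : 0 ≤ K * v ^ (a + b) := by positivity
  linarith

private lemma hgu {u : ℝ} (hu : 0 < u) (v : ℝ) :
    HasDerivAt (fun x : ℝ => A * x ^ a * v ^ b + K * v ^ (a + b))
      (A * (a * u ^ (a - 1)) * v ^ b) u :=
  (((Real.hasDerivAt_rpow_const (Or.inl hu.ne')).const_mul A).mul_const (v ^ b)).add_const _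

private lemma hgv {u v : ℝ} (hv : 0 < v) :
    HasDerivAt (fun y : ℝ => A * u ^ a * y ^ b + K * y ^ (a + b))
      (A * u ^ a * (b * v ^ (b - 1)) + K * ((a + b) * v ^ (a + b - 1))) v :=
  ((Real.hasDerivAt_rpow_const (Or.inl hv.ne')).const_mul (A * u ^ a)).add
    ((Real.hasDerivAt_rpow_const (Or.inl hv.ne')).const_mul K)

private lemma pdu_f (hA : 0 < A) (hK : 0 ≤ K) {u v : ℝ} (hu : 0 < u) (hv : 0 < v) :
    pdu (fun u v => (A * u ^ a * v ^ b + K * v ^ (a + b)) ^ c) u v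
      = A * (a * u ^ (a - 1)) * v ^ b * c * (A * u ^ a * v ^ b + K * v ^ (a + b)) ^ (c - 1) :=
  ((hgu A K a b hu v).rpow_const (Or.inl (gpos A K a b hA hK hu hv).ne')).deriv

private lemma pdv_f (hA : 0 < A) (hK : 0 ≤ K) {u v : ℝ} (hu : 0 < u) (hv : 0 < v) :
    pdv (fun u v => (A * u ^ a * v ^ b + K * v ^ (a + b)) ^ c) u v
      = (A * u ^ a * (b * v ^ (b - 1)) + K * ((a + b) * v ^ (a + b - 1))) * c
          * (A * u ^ a * v ^ b + K * v ^ (a + b)) ^ (c - 1) :=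
  ((hgv A K a b hv).rpow_const (Or.inl (gpos A K a b hA hK hu hv).ne')).deriv

private lemma pduu_f (hA : 0 < A) (hK : 0 ≤ K) {u v : ℝ} (hu : 0 < u) (hv : 0 < v) :
    pdu (pdu (fun u v => (A * u ^ a * v ^ b + K * v ^ (a + b)) ^ c)) u v
      = A * (a * ((a - 1) * u ^ (a - 1 - 1))) * v ^ b * c
          * (A * u ^ a * v ^ b + K * v ^ (a + b)) ^ (c - 1)
        + A * (a * u ^ (a - 1)) * v ^ b * c
          * (A * (a * u ^ (a - 1)) * v ^ b * (c - 1)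
              * (A * u ^ a * v ^ b + K * v ^ (a + b)) ^ (c - 1 - 1)) := by
  have hev : (fun x => pdu (fun u v => (A * u ^ a * v ^ b + K * v ^ (a + b)) ^ c) x v)
      =ᶠ[nhds u] (fun x => A * (a * x ^ (a - 1)) * v ^ b * c
          * (A * x ^ a * v ^ b + K * v ^ (a + b)) ^ (c - 1)) := by
    filter_upwards [isOpen_Ioi.mem_nhds hu] with x hx
    exact pdu_f A K a b c hA hK hx hv
  have h1 : HasDerivAt (fun x : ℝ => A * (a * x ^ (a - 1)) * v ^ b * c)
      (A * (a * ((a - 1) * u ^ (a - 1 - 1))) * v ^ b * c) u :=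
    ((((Real.hasDerivAt_rpow_const (Or.inl hu.ne')).const_mul a).const_mul A).mul_const
      (v ^ b)).mul_const c
  have h2 : HasDerivAt (fun x : ℝ => (A * x ^ a * v ^ b + K * v ^ (a + b)) ^ (c - 1))
      (A * (a * u ^ (a - 1)) * v ^ b * (c - 1)
        * (A * u ^ a * v ^ b + K * v ^ (a + b)) ^ (c - 1 - 1)) u :=
    (hgu A K a b hu v).rpow_const (Or.inl (gpos A K a b hA hK hu hv).ne')
  show deriv (fun x => pdu (fun u v => (A * u ^ a * v ^ b + K * v ^ (a + b)) ^ c) x v) u = _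
  rw [hev.deriv_eq]
  exact (h1.mul h2).deriv

private lemma pduv_f (hA : 0 < A) (hK : 0 ≤ K) {u v : ℝ} (hu : 0 < u) (hv : 0 < v) :
    pdv (pdu (fun u v => (A * u ^ a * v ^ b + K * v ^ (a + b)) ^ c)) u v
      = A * (a * u ^ (a - 1)) * (b * v ^ (b - 1)) * c
          * (A * u ^ a * v ^ b + K * v ^ (a + b)) ^ (c - 1)
        + A * (a * u ^ (a - 1)) * v ^ b * c
          * ((A * u ^ a * (b * v ^ (b - 1)) + K * ((a + b) * v ^ (a + b - 1))) * (c - 1)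
              * (A * u ^ a * v ^ b + K * v ^ (a + b)) ^ (c - 1 - 1)) := by
  have hev : (fun y => pdu (fun u v => (A * u ^ a * v ^ b + K * v ^ (a + b)) ^ c) u y)
      =ᶠ[nhds v] (fun y => A * (a * u ^ (a - 1)) * y ^ b * c
          * (A * u ^ a * y ^ b + K * y ^ (a + b)) ^ (c - 1)) := by
    filter_upwards [isOpen_Ioi.mem_nhds hv] with y hy
    exact pdu_f A K a b c hA hK hu hy
  have h1 : HasDerivAt (fun y : ℝ => A * (a * u ^ (a - 1)) * y ^ b * c)
      (A * (a * u ^ (a - 1)) * (b * v ^ (b - 1)) * c) v :=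
    (((Real.hasDerivAt_rpow_const (Or.inl hv.ne')).const_mul (A * (a * u ^ (a - 1)))).mul_const
      c)
  have h2 : HasDerivAt (fun y : ℝ => (A * u ^ a * y ^ b + K * y ^ (a + b)) ^ (c - 1))
      ((A * u ^ a * (b * v ^ (b - 1)) + K * ((a + b) * v ^ (a + b - 1))) * (c - 1)
        * (A * u ^ a * v ^ b + K * v ^ (a + b)) ^ (c - 1 - 1)) v :=
    (hgv A K a b hv).rpow_const (Or.inl (gpos A K a b hA hK hu hv).ne')
  show deriv (fun y => pdu (fun u v => (A * u ^ a * v ^ b + K * v ^ (a + b)) ^ c) u y) v = _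
  rw [hev.deriv_eq]
  exact (h1.mul h2).deriv

private lemma pdvv_f (hA : 0 < A) (hK : 0 ≤ K) {u v : ℝ} (hu : 0 < u) (hv : 0 < v) :
    pdv (pdv (fun u v => (A * u ^ a * v ^ b + K * v ^ (a + b)) ^ c)) u v
      = (A * u ^ a * (b * ((b - 1) * v ^ (b - 1 - 1)))
            + K * ((a + b) * ((a + b - 1) * v ^ (a + b - 1 - 1)))) * c
          * (A * u ^ a * v ^ b + K * v ^ (a + b)) ^ (c - 1)
        + (A * u ^ a * (b * v ^ (b - 1)) + K * ((a + b) * v ^ (a + b - 1))) * c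
          * ((A * u ^ a * (b * v ^ (b - 1)) + K * ((a + b) * v ^ (a + b - 1))) * (c - 1)
              * (A * u ^ a * v ^ b + K * v ^ (a + b)) ^ (c - 1 - 1)) := by
  have hev : (fun y => pdv (fun u v => (A * u ^ a * v ^ b + K * v ^ (a + b)) ^ c) u y)
      =ᶠ[nhds v] (fun y => (A * u ^ a * (b * y ^ (b - 1)) + K * ((a + b) * y ^ (a + b - 1))) * c
          * (A * u ^ a * y ^ b + K * y ^ (a + b)) ^ (c - 1)) := by
    filter_upwards [isOpen_Ioi.mem_nhds hv] with y hy
    exact pdv_f A K a b c hA hK hu hy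
  have h1 : HasDerivAt
      (fun y : ℝ => (A * u ^ a * (b * y ^ (b - 1)) + K * ((a + b) * y ^ (a + b - 1))) * c)
      ((A * u ^ a * (b * ((b - 1) * v ^ (b - 1 - 1)))
          + K * ((a + b) * ((a + b - 1) * v ^ (a + b - 1 - 1)))) * c) v :=
    ((((Real.hasDerivAt_rpow_const (Or.inl hv.ne')).const_mul b).const_mul (A * u ^ a)).add
      (((Real.hasDerivAt_rpow_const (Or.inl hv.ne')).const_mul (a + b)).const_mul K)).mul_const c
  have h2 : HasDerivAt (fun y : ℝ => (A * u ^ a * y ^ b + K * y ^ (a + b)) ^ (c - 1))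
      ((A * u ^ a * (b * v ^ (b - 1)) + K * ((a + b) * v ^ (a + b - 1))) * (c - 1)
        * (A * u ^ a * v ^ b + K * v ^ (a + b)) ^ (c - 1 - 1)) v :=
    (hgv A K a b hv).rpow_const (Or.inl (gpos A K a b hA hK hu hv).ne')
  show deriv (fun y => pdv (fun u v => (A * u ^ a * v ^ b + K * v ^ (a + b)) ^ c) u y) v = _
  rw [hev.deriv_eq]
  exact (h1.mul h2).deriv

private lemma hess_eq_s15 (hA : 0 < A) (hK : 0 ≤ K) {u : ℝ} (hu : 0 < u) :
    hessDet (fun u v => (A * u ^ a * v ^ b + K * v ^ (a + b)) ^ c) u 1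
      = a * c ^ 2 * (1 - c * (a + b)) * (A * u ^ a) * ((A * u ^ a + K) ^ (c - 2)) ^ 2
          * (A * u ^ a + K) ^ 2 * (b * (A * u ^ a + K) + a * (1 - (a + b)) * K) / u ^ 2 := by
  have h1 : (0 : ℝ) < 1 := one_pos
  rw [hessDet, pduu_f A K a b c hA hK hu h1, pdvv_f A K a b c hA hK hu h1,
    pduv_f A K a b c hA hK hu h1]
  simp only [Real.one_rpow, mul_one, one_mul]
  have hg : 0 < A * u ^ a + K := by
    have h1 : 0 < A * u ^ a := by positivity
    linarith
  have e1 : u ^ (a - 1) = u ^ a / u := by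
    rw [Real.rpow_sub hu, Real.rpow_one]
  have e2 : u ^ (a - 1 - 1) = u ^ a / u / u := by
    rw [Real.rpow_sub hu (a - 1) 1, Real.rpow_one, e1]
  have e3 : (A * u ^ a + K) ^ (c - 1) = (A * u ^ a + K) ^ (c - 2) * (A * u ^ a + K) := by
    rw [show c - 1 = c - 2 + 1 by ring, Real.rpow_add_one hg.ne']
  have e4 : (A * u ^ a + K) ^ (c - 1 - 1) = (A * u ^ a + K) ^ (c - 2) := by
    rw [show c - 1 - 1 = c - 2 by ring]
  rw [e1, e2, e3, e4]
  field_simp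
  ring

end Aux

/-- If `k₁ = 0` (so `k₂ > 0`) and `δ ≠ 1`, the Gaussian curvature of the Kadiyala surface
does not vanish identically on `(0,∞)²`: the surface is not developable in this case. -/
theorem kadiyala_k₁_zero_not_developable
    (k₁ k₂ k₃ β₁ β₂ δ : ℝ)
    (hsum : k₁ + 2 * k₂ + k₃ = 1) (hk₁ : 0 ≤ k₁) (hk₂ : 0 ≤ k₂) (hk₃ : 0 ≤ k₃)
    (h12 : ¬(k₁ = 0 ∧ k₂ = 0)) (h23 : ¬(k₂ = 0 ∧ k₃ = 0))
    (hβ₁ : 0 < β₁ * (β₁ + β₂)) (hβ₂ : 0 < β₂ * (β₁ + β₂)) (hδ : 0 < δ) (hk1 : k₁ = 0) (hδ1 : δ ≠ 1) :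
    ¬ ∀ u v : ℝ, 0 < u → 0 < v → gaussK (PKad k₁ k₂ k₃ β₁ β₂ δ) u v = 0 := by
  intro h
  have hs : β₁ + β₂ ≠ 0 := by
    intro h0; rw [h0, mul_zero] at hβ₁; exact lt_irrefl 0 hβ₁
  have ha : β₁ ≠ 0 := by
    intro h0; rw [h0, zero_mul] at hβ₁; exact lt_irrefl 0 hβ₁
  have hb : β₂ ≠ 0 := by
    intro h0; rw [h0, zero_mul] at hβ₂; exact lt_irrefl 0 hβ₂
  have hk2 : 0 < k₂ := lt_of_le_of_ne hk₂ (Ne.symm fun h0 => h12 ⟨hk1, h0⟩)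
  have hA : 0 < 2 * k₂ := by linarith
  set c := δ / (β₁ + β₂) with hcdef
  have hc : c ≠ 0 := div_ne_zero hδ.ne' hs
  have hcs : c * (β₁ + β₂) = δ := div_mul_cancel₀ δ hs
  have h1δ : 1 - c * (β₁ + β₂) ≠ 0 := by
    rw [hcs]; exact sub_ne_zero.mpr (Ne.symm hδ1)
  have hPf : PKad k₁ k₂ k₃ β₁ β₂ δ
      = fun u v => (2 * k₂ * u ^ β₁ * v ^ β₂ + k₃ * v ^ (β₁ + β₂)) ^ c := by
    funext u v
    simp [PKad, hk1, hcdef]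
  have hz : ∀ u : ℝ, 0 < u →
      hessDet (fun u v => (2 * k₂ * u ^ β₁ * v ^ β₂ + k₃ * v ^ (β₁ + β₂)) ^ c) u 1 = 0 := by
    intro u hu
    have h0 := h u 1 hu one_pos
    rw [hPf] at h0
    rw [gaussK, div_eq_zero_iff] at h0
    rcases h0 with h0 | h0
    · exact h0
    · exfalso
      have hpos : (0 : ℝ) <
          (1 + pdu (fun u v => (2 * k₂ * u ^ β₁ * v ^ β₂ + k₃ * v ^ (β₁ + β₂)) ^ c) u 1 ^ 2
            + pdv (fun u v => (2 * k₂ * u ^ β₁ * v ^ β₂ + k₃ * v ^ (β₁ + β₂)) ^ c) u 1 ^ 2) ^ 2 := by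
        positivity
      exact hpos.ne' h0
  -- evaluate at u = 1
  have hE1 := (hess_eq_s15 (2 * k₂) k₃ β₁ β₂ c hA hk₃ one_pos).symm.trans (hz 1 one_pos)
  simp only [Real.one_rpow, mul_one, one_pow, div_one] at hE1
  have hg1 : (0 : ℝ) < 2 * k₂ + k₃ := by linarith
  have hM1 : β₂ * (2 * k₂ + k₃) + β₁ * (1 - (β₁ + β₂)) * k₃ = 0 := by
    by_contra hM
    have hne : β₁ * c ^ 2 * (1 - c * (β₁ + β₂)) * (2 * k₂) * ((2 * k₂ + k₃) ^ (c - 2)) ^ 2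
        * (2 * k₂ + k₃) ^ 2 * (β₂ * (2 * k₂ + k₃) + β₁ * (1 - (β₁ + β₂)) * k₃) ≠ 0 := by
      apply mul_ne_zero _ hM
      apply mul_ne_zero
      apply mul_ne_zero
      apply mul_ne_zero
      apply mul_ne_zero
      · exact mul_ne_zero ha (pow_ne_zero 2 hc)
      · exact h1δ
      · exact hA.ne'
      · positivity
      · positivity
    exact hne hE1
  -- evaluate at u₀ = 2 ^ (β₁⁻¹)
  set u₀ : ℝ := (2 : ℝ) ^ (β₁⁻¹) with hu₀def
  have hu₀ : 0 < u₀ := Real.rpow_pos_of_pos two_pos _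
  have ht₀ : u₀ ^ β₁ = 2 := by
    rw [hu₀def, ← Real.rpow_mul (by norm_num : (0:ℝ) ≤ 2), inv_mul_cancel₀ ha, Real.rpow_one]
  have hE2 := (hess_eq_s15 (2 * k₂) k₃ β₁ β₂ c hA hk₃ hu₀).symm.trans (hz u₀ hu₀)
  rw [ht₀] at hE2
  rw [div_eq_zero_iff] at hE2
  have hg2 : (0 : ℝ) < 2 * k₂ * 2 + k₃ := by linarith
  have hM2 : β₂ * (2 * k₂ * 2 + k₃) + β₁ * (1 - (β₁ + β₂)) * k₃ = 0 := by
    rcases hE2 with h0 | h0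
    · by_contra hM
      have hne : β₁ * c ^ 2 * (1 - c * (β₁ + β₂)) * (2 * k₂ * 2)
          * ((2 * k₂ * 2 + k₃) ^ (c - 2)) ^ 2 * (2 * k₂ * 2 + k₃) ^ 2
          * (β₂ * (2 * k₂ * 2 + k₃) + β₁ * (1 - (β₁ + β₂)) * k₃) ≠ 0 := by
        apply mul_ne_zero _ hM
        apply mul_ne_zero
        apply mul_ne_zero
        apply mul_ne_zero
        apply mul_ne_zero
        · exact mul_ne_zero ha (pow_ne_zero 2 hc)
        · exact h1δ
        · positivity
        · positivity
        · positivity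
      exact hne h0
    · exact absurd h0 (by positivity)
  have hzero : 2 * k₂ * β₂ = 0 := by linear_combination hM2 - hM1
  exact (mul_ne_zero (mul_ne_zero two_ne_zero hk2.ne') hb) hzero
end

section
/- Let β ≠ 0 and k₁, k₂, k₃ > 0. The function T(u,v) = 4β²(β−1)k₁k₂·u^{2β} + 4β²((2β−1)k₁k₃ − k₂²)·u^β·v^β + 4β²(β−1)k₂k₃·v^{2β} vanishes for all u, v > 0 if and only if β = 1 and k₁k₃ = k₂². -/
open Real

/-- Key algebraic lemma for the Kadiyala function with `β₁ = β₂ = β` and `k₁, k₂, k₃ > 0`: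
the function
`T(u,v) = 4β²(β−1)k₁k₂·u^(2β) + 4β²((2β−1)k₁k₃ − k₂²)·u^β·v^β + 4β²(β−1)k₂k₃·v^(2β)`
vanishes for all `u, v > 0` if and only if `β = 1` and `k₁k₃ = k₂²`. -/
theorem kadiyala_T₂_vanishes_iff
    (β k₁ k₂ k₃ : ℝ) (hβ : β ≠ 0) (hk₁ : 0 < k₁) (hk₂ : 0 < k₂) (hk₃ : 0 < k₃) :
    (∀ u v : ℝ, 0 < u → 0 < v →
        4 * β ^ 2 * (β - 1) * k₁ * k₂ * u ^ (2 * β)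
          + 4 * β ^ 2 * ((2 * β - 1) * k₁ * k₃ - k₂ ^ 2) * (u ^ β * v ^ β)
          + 4 * β ^ 2 * (β - 1) * k₂ * k₃ * v ^ (2 * β) = 0) ↔
      (β = 1 ∧ k₁ * k₃ = k₂ ^ 2) := by
  constructor
  · intro h
    set A := 4 * β ^ 2 * (β - 1) * k₁ * k₂ with hA
    set B := 4 * β ^ 2 * ((2 * β - 1) * k₁ * k₃ - k₂ ^ 2) with hB
    set C := 4 * β ^ 2 * (β - 1) * k₂ * k₃ with hC
    have key : ∀ t : ℝ, 0 < t → A + B * t + C * t ^ 2 = 0 := by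
      intro t ht
      have hv : (0 : ℝ) < t ^ (β⁻¹) := Real.rpow_pos_of_pos ht _
      have h1 := h 1 (t ^ (β⁻¹)) one_pos hv
      have e1 : ((t ^ (β⁻¹)) ^ β : ℝ) = t := by
        rw [← Real.rpow_mul ht.le, inv_mul_cancel₀ hβ, Real.rpow_one]
      have e2 : ((t ^ (β⁻¹)) ^ (2 * β) : ℝ) = t ^ 2 := by
        rw [← Real.rpow_mul ht.le]
        have : β⁻¹ * (2 * β) = 2 := by field_simp
        rw [this]
        rw [show ((2:ℝ) = ((2:ℕ):ℝ)) by norm_num, Real.rpow_natCast]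
      rw [Real.one_rpow, Real.one_rpow, e1, e2, one_mul] at h1
      linarith
    have k1 := key 1 one_pos
    have k2 := key 2 two_pos
    have k3 := key 3 three_pos
    have hC0 : C = 0 := by nlinarith
    have hB0 : B = 0 := by nlinarith
    have hβ1 : β = 1 := by
      have hpos : 0 < 4 * β ^ 2 * k₂ * k₃ := by positivity
      have : (β - 1) * (4 * β ^ 2 * k₂ * k₃) = 0 := by rw [hC] at hC0; linarith [hC0]; 
      rcases mul_eq_zero.mp this with h' | h'
      · linarith
      · exact absurd h' (ne_of_gt hpos)
    refine ⟨hβ1, ?_⟩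
    subst hβ1
    rw [hB] at hB0
    nlinarith
  · rintro ⟨hβ1, hk⟩
    subst hβ1
    intro u v hu hv
    linear_combination (4 * (u ^ (1:ℝ) * v ^ (1:ℝ))) * hk
end
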